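/- arXiv:0710.5566 — 6 statements merged into one kernel-verified Lean document; each statement's English description precedes it below -/
import Mathlib

section
/- Let ξ, η ∈ c₀* with ξ ≼ η, and suppose η has finite support (there is N with η_n = 0 for all n > N). Then there exists an orthostochastic matrix Q such that ξ_i = ∑_{j=1}^∞ Q_{ij} η_j for every i. -/
noncomputable section

open Filter Finset

/-- `ξ ∈ c₀*`: a nonnegative, nonincreasing sequence converging to `0`
(indexed from `0` here; the paper indexes from `1`). -/
def IsCoStar (ξ : ℕ → ℝ) : Prop :=
  (∀ n, 0 ≤ ξ n) ∧ Antitone ξ ∧ Tendsto ξ atTop (nhds 0)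

/-- `ξ ≺ η` (η majorizes ξ): all partial sums of `ξ` are dominated by those of `η`. -/
def Maj (ξ η : ℕ → ℝ) : Prop :=
  ∀ n : ℕ, ∑ j ∈ range n, ξ j ≤ ∑ j ∈ range n, η j

/-- `ξ ≼ η` (η strongly majorizes ξ): `ξ ≺ η` and
`liminf_n ∑_{j<n} (η_j - ξ_j) = 0` (the liminf taken in the extended reals). -/
def SMaj (ξ η : ℕ → ℝ) : Prop :=
  Maj ξ η ∧
    liminf (fun n => ((∑ j ∈ range n, (η j - ξ j) : ℝ) : EReal)) atTop = 0

/-- A matrix `U : ℕ × ℕ → ℝ` is orthogonal if its rows form an orthonormal family in ℓ²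
and its columns form an orthonormal family in ℓ². -/
def OrthogonalMatrix (U : ℕ → ℕ → ℝ) : Prop :=
  (∀ i i', HasSum (fun j => U i j * U i' j) (if i = i' then (1 : ℝ) else 0)) ∧
  (∀ j j', HasSum (fun i => U i j * U i j') (if j = j' then (1 : ℝ) else 0))

/-- A matrix `Q` is orthostochastic if it is the entrywise square of an orthogonal matrix. -/
def Orthostochastic (Q : ℕ → ℕ → ℝ) : Prop :=
  ∃ U : ℕ → ℕ → ℝ, OrthogonalMatrix U ∧ ∀ i j, Q i j = (U i j) ^ 2

/-!
Strong majorization with finitely supported `η` forces `∑ ξ = ∑ η = S`, so the tails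
`ρ = ∑_{i ≥ t} ξ_i` tend to `0`; take `t` past the support of `η` with `ρ` below every nonzero
`η_j`. Inserting `ρ` into `ξ_0, …, ξ_{t-1}` at its sorted place gives a finite vector `ζ`
majorized by `η` with the same sum, so Horn's theorem (the classical induction that splits off
one plane rotation at a time) yields an orthogonal `(t+1) × (t+1)` matrix `B` with
`∑_j B_{ij}² η_j = ζ_i`. The row of `B` carrying `ρ` is then spread over infinitely many rows
with weights `ξ_i / ρ` (`i ≥ t`): multiply `B ⊕ 1` on the left by a Householder reflection
sending `e_t` to the unit vector `(√(ξ_i / ρ))_{i ≥ t}`.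
-/

/-! ### Horn's theorem for finite matrices -/

/-- `A` restricted to `range n × range n` has orthonormal rows; for a square matrix this already
makes it orthogonal (`IsOrthogonalOn.transpose`). -/
def IsOrthogonalOn (n : ℕ) (A : ℕ → ℕ → ℝ) : Prop :=
  ∀ i < n, ∀ i' < n, ∑ j ∈ range n, A i j * A i' j = if i = i' then 1 else 0

lemma IsOrthogonalOn.transpose {n : ℕ} {A : ℕ → ℕ → ℝ} (hA : IsOrthogonalOn n A) :
    IsOrthogonalOn n fun i j => A j i := by
  set M : Matrix (Fin n) (Fin n) ℝ := Matrix.of fun i j => A i j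
  have hM : M * M.transpose = 1 := by
    ext i i'
    simp [M, Matrix.mul_apply, Matrix.one_apply, ← sum_range (fun j => A i j * A i' j),
      hA i i.2 i' i'.2, Fin.ext_iff]
  intro j hj j' hj'
  have := congr_fun₂ (mul_eq_one_comm.1 hM : M.transpose * M = 1) ⟨j, hj⟩ ⟨j', hj'⟩
  simpa [M, Matrix.mul_apply, Matrix.one_apply, ← sum_range (fun i => A i j * A i j'),
    Fin.ext_iff] using this

lemma IsOrthogonalOn.sum_sum_mul_sum {n : ℕ} {B : ℕ → ℕ → ℝ} (hB : IsOrthogonalOn n B)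
    (x y : ℕ → ℝ) :
    ∑ j ∈ range n, (∑ l ∈ range n, x l * B l j) * (∑ l ∈ range n, y l * B l j) =
      ∑ l ∈ range n, x l * y l := by
  simp_rw [sum_mul_sum]
  rw [sum_comm]
  refine sum_congr rfl fun l hl => ?_
  rw [sum_comm]
  have h : ∀ l' ∈ range n, ∑ j ∈ range n, x l * B l j * (y l' * B l' j) =
      x l * y l' * if l = l' then 1 else 0 := fun l' hl' => by
    rw [← hB l (mem_range.1 hl) l' (mem_range.1 hl'), mul_sum]
    exact sum_congr rfl fun _ _ => by ring
  rw [sum_congr rfl h]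
  simp [hl]

def mergeAt (k : ℕ) (x : ℝ) (f : ℕ → ℝ) : ℕ → ℝ :=
  fun j => if j < k then f j else if j = k then x else f (j + 1)

lemma sum_range_mergeAt {k n : ℕ} (hk : k < n) (x : ℝ) (f : ℕ → ℝ) :
    ∑ j ∈ range n, mergeAt k x f j = ∑ j ∈ range (n + 1), f j - f k - f (k + 1) + x := by
  induction n, hk using Nat.le_induction with
  | base =>
    have h : ∑ j ∈ range k, mergeAt k x f j = ∑ j ∈ range k, f j :=
      sum_congr rfl fun j hj => if_pos (mem_range.1 hj)
    rw [sum_range_succ, h, sum_range_succ, sum_range_succ]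
    simp only [mergeAt, lt_self_iff_false, ↓reduceIte, add_left_inj]
    ring
  | succ n hn ih =>
    rw [sum_range_succ, ih, sum_range_succ _ (n + 1)]
    simp only [mergeAt, show ¬ n < k by omega, show n ≠ k by omega, if_false]
    ring

lemma antitone_mergeAt {k : ℕ} {x : ℝ} {f : ℕ → ℝ} (hf : Antitone f) (h₁ : f (k + 1) ≤ x)
    (h₂ : x ≤ f k) : Antitone (mergeAt k x f) := by
  refine antitone_nat_of_succ_le fun j => ?_
  rcases lt_trichotomy (j + 1) k with h | h | h
  · simp [mergeAt, h, show j < k by omega, hf (Nat.le_succ j)]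
  · subst h
    simp only [mergeAt, lt_add_iff_pos_right, zero_lt_one, if_true, lt_irrefl, if_false]
    exact h₂.trans (hf (Nat.le_succ j))
  · rcases lt_or_eq_of_le (show k ≤ j by omega) with h' | rfl
    · simp only [mergeAt, show ¬ j < k by omega, show j ≠ k by omega, show ¬ j + 1 < k by omega,
        show j + 1 ≠ k by omega, if_false]
      exact hf (Nat.le_succ (j + 1))
    · simp only [mergeAt, lt_irrefl, if_false, if_true, show ¬ k + 1 < k by omega,
        show k + 1 ≠ k by omega]
      exact (hf (Nat.le_succ (k + 1))).trans h₁

/-- The inductive step of Horn's theorem: the rows of `A`, with column `k` rotated into the plane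
of columns `k, k + 1`, stacked under the unit vector `c e_k + s e_{k+1}` orthogonal to them. -/
def hornStep (k : ℕ) (c s : ℝ) (A : ℕ → ℕ → ℝ) : ℕ → ℕ → ℝ
  | 0, j => if j = k then c else if j = k + 1 then s else 0
  | a + 1, j =>
    if j < k then A a j else if j = k then -s * A a k else if j = k + 1 then c * A a k
    else A a (j - 1)

lemma sum_hornStep_zero_mul {k n : ℕ} (hk : k < n) (c s : ℝ) (A : ℕ → ℕ → ℝ) (g : ℕ → ℝ) :
    ∑ j ∈ range (n + 1), hornStep k c s A 0 j * g j = c * g k + s * g (k + 1) := by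
  rw [sum_eq_add_of_mem k (k + 1) (by simp; omega) (by simp; omega) (by omega)]
  · simp [hornStep]
  · rintro j - ⟨hj, hj'⟩
    simp [hornStep, hj, hj']

lemma sum_hornStep_succ_mul {k n : ℕ} (hk : k < n) (c s : ℝ) (A : ℕ → ℕ → ℝ) (a b : ℕ)
    (g : ℕ → ℝ) :
    ∑ j ∈ range (n + 1), hornStep k c s A (a + 1) j * hornStep k c s A (b + 1) j * g j =
      ∑ j ∈ range n, A a j * A b j * mergeAt k (s ^ 2 * g k + c ^ 2 * g (k + 1)) g j := by
  set F := fun j => hornStep k c s A (a + 1) j * hornStep k c s A (b + 1) j * g j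
  have hF : ∀ j, A a j * A b j * mergeAt k (s ^ 2 * g k + c ^ 2 * g (k + 1)) g j =
      mergeAt k (F k + F (k + 1)) F j := by
    intro j
    rcases lt_trichotomy j k with h | rfl | h
    · simp [F, mergeAt, hornStep, h]
    · simp only [F, mergeAt, hornStep, lt_self_iff_false, ↓reduceIte, add_lt_iff_neg_left,
        not_lt_zero, Nat.add_eq_left, one_ne_zero]
      ring
    · simp [F, mergeAt, hornStep, show ¬ j < k by omega, show j ≠ k by omega,
        show ¬ j + 1 < k by omega, show j + 1 ≠ k by omega]
  rw [sum_congr rfl fun j _ => hF j, sum_range_mergeAt hk]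
  ring

lemma isOrthogonalOn_hornStep {n k : ℕ} {A : ℕ → ℕ → ℝ} (hA : IsOrthogonalOn n A)
    (hk : k < n) {c s : ℝ} (hcs : c ^ 2 + s ^ 2 = 1) :
    IsOrthogonalOn (n + 1) (hornStep k c s A) := by
  have h₀ : ∀ b, ∑ j ∈ range (n + 1), hornStep k c s A 0 j * hornStep k c s A (b + 1) j = 0 := by
    intro b
    rw [sum_hornStep_zero_mul hk]
    simp only [hornStep, ↓reduceIte, lt_self_iff_false, add_lt_iff_neg_left, not_lt_zero,
      Nat.add_eq_left, one_ne_zero]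
    ring
  rintro (_ | a) ha (_ | b) hb
  · rw [sum_hornStep_zero_mul hk]
    simp only [hornStep, ↓reduceIte, Nat.add_eq_left, one_ne_zero]
    linear_combination hcs
  · simpa using h₀ b
  · simpa [mul_comm] using h₀ a
  · have h1 : mergeAt k (s ^ 2 + c ^ 2) (fun _ => 1) = fun _ => 1 := by
      ext j
      simp only [mergeAt]
      split_ifs <;> first | rfl | linear_combination hcs
    have h := sum_hornStep_succ_mul hk c s A a b fun _ => 1
    simp only [mul_one, h1] at h
    rw [h, hA a (by omega) b (by omega)]
    simp

lemma exists_apply_succ_le_and_le_apply {f : ℕ → ℝ} {x : ℝ} :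
    ∀ n, f (n + 1) ≤ x → x ≤ f 0 → ∃ k ≤ n, f (k + 1) ≤ x ∧ x ≤ f k
  | 0, h₁, h₂ => ⟨0, le_rfl, h₁, h₂⟩
  | n + 1, h₁, h₂ => by
    by_cases h : x ≤ f (n + 1)
    · exact ⟨n + 1, le_rfl, h₁, h⟩
    · obtain ⟨k, hk, hk'⟩ := exists_apply_succ_le_and_le_apply n (le_of_not_ge h) h₂
      exact ⟨k, by omega, hk'⟩

lemma exists_sq_add_sq_eq_one_and_eq {a b x : ℝ} (hb : b ≤ x) (ha : x ≤ a) :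
    ∃ c s : ℝ, c ^ 2 + s ^ 2 = 1 ∧ c ^ 2 * a + s ^ 2 * b = x := by
  obtain ⟨p, q, hp, hq, hpq, hx⟩ : x ∈ segment ℝ b a := by
    rw [segment_eq_Icc (hb.trans ha)]
    exact ⟨hb, ha⟩
  refine ⟨√q, √p, ?_, ?_⟩ <;> rw [Real.sq_sqrt hp, Real.sq_sqrt hq]
  · linarith
  · simpa [add_comm, smul_eq_mul] using hx

lemma exists_lt_apply_succ_le_le_apply {n : ℕ} (hn : 0 < n) {ξ η : ℕ → ℝ} (hξ : Antitone ξ)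
    (hη : Antitone η) (h₀ : ξ 0 ≤ η 0)
    (hsum : ∑ i ∈ range (n + 1), ξ i = ∑ i ∈ range (n + 1), η i) :
    ∃ k < n, η (k + 1) ≤ ξ 0 ∧ ξ 0 ≤ η k := by
  have hη_le : (n + 1) • η n ≤ (n + 1) • ξ 0 := by
    calc (n + 1) • η n ≤ ∑ i ∈ range (n + 1), η i := by
          simpa using card_nsmul_le_sum (range (n + 1)) η (η n)
            fun i hi => hη (Nat.lt_succ_iff.1 (mem_range.1 hi))
      _ = ∑ i ∈ range (n + 1), ξ i := hsum.symm
      _ ≤ (n + 1) • ξ 0 := by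
          simpa using sum_le_card_nsmul (range (n + 1)) ξ (ξ 0) fun i _ => hξ (Nat.zero_le i)
  obtain ⟨k, hk, hk'⟩ := exists_apply_succ_le_and_le_apply (f := η) (n - 1)
    (by simpa [Nat.sub_add_cancel hn] using le_of_nsmul_le_nsmul_right (by omega) hη_le) h₀
  exact ⟨k, by omega, hk'⟩

theorem exists_isOrthogonalOn_sum_sq_mul_eq :
    ∀ (n : ℕ) {ξ η : ℕ → ℝ}, Antitone ξ → Antitone η →
      (∀ m ≤ n, ∑ i ∈ range m, ξ i ≤ ∑ i ∈ range m, η i) →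
      ∑ i ∈ range n, ξ i = ∑ i ∈ range n, η i →
      ∃ A, IsOrthogonalOn n A ∧ ∀ i < n, ∑ j ∈ range n, A i j ^ 2 * η j = ξ i
  | 0, _, _, _, _, _, _ => ⟨0, by simp [IsOrthogonalOn], by simp⟩
  | n + 1, ξ, η, hξ, hη, hmaj, hsum => by
    rcases Nat.eq_zero_or_pos n with rfl | hn
    · exact ⟨fun _ _ => 1, by simp [IsOrthogonalOn], by simpa using hsum.symm⟩
    obtain ⟨k, hk, hk₁, hk₂⟩ :=
      exists_lt_apply_succ_le_le_apply hn hξ hη (by simpa using hmaj 1 (by omega)) hsum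
    obtain ⟨c, s, hcs, hξ₀⟩ := exists_sq_add_sq_eq_one_and_eq hk₁ hk₂
    -- Row `0` takes care of `ξ 0 = c² η k + s² η (k + 1)`; the remaining rows come from the
    -- induction hypothesis for `ξ ∘ succ` and `η` with `η k, η (k + 1)` merged into `x`.
    set x := s ^ 2 * η k + c ^ 2 * η (k + 1)
    have hηx : ∀ m, k < m → ∑ i ∈ range m, mergeAt k x η i = ∑ i ∈ range (m + 1), η i - ξ 0 :=
      fun m hm => by rw [sum_range_mergeAt hm]; linear_combination (η k + η (k + 1)) * hcs - hξ₀
    have hξx : ∀ m, ∑ i ∈ range m, ξ (i + 1) = ∑ i ∈ range (m + 1), ξ i - ξ 0 :=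
      fun m => by rw [sum_range_succ']; ring
    have hmaj' : ∀ m ≤ n, ∑ i ∈ range m, ξ (i + 1) ≤ ∑ i ∈ range m, mergeAt k x η i := by
      intro m hm
      rcases le_or_gt m k with hmk | hmk
      · refine sum_le_sum fun i hi => ?_
        have hik : i < k := (mem_range.1 hi).trans_le hmk
        simpa [mergeAt, hik] using ((hξ (Nat.zero_le _)).trans hk₂).trans (hη hik.le)
      · rw [hηx m hmk, hξx m]
        linarith [hmaj (m + 1) (by omega)]
    have hantitone : Antitone (mergeAt k x η) := by
      have h : 0 ≤ η k - η (k + 1) := sub_nonneg.2 (hη (Nat.le_succ k))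
      refine antitone_mergeAt hη ?_ ?_
      · linear_combination mul_nonneg (sq_nonneg s) h - η (k + 1) * hcs
      · linear_combination mul_nonneg (sq_nonneg c) h + η k * hcs
    obtain ⟨A, hA, hAη⟩ := exists_isOrthogonalOn_sum_sq_mul_eq n (fun _ _ h => hξ (by omega))
      hantitone hmaj' (by rw [hηx n hk, hξx n, hsum])
    refine ⟨hornStep k c s A, isOrthogonalOn_hornStep hA hk hcs, ?_⟩
    rintro (_ | a) ha
    · simp only [sq, mul_assoc]
      rw [sum_hornStep_zero_mul hk]
      simp only [hornStep, ↓reduceIte, Nat.add_eq_left, one_ne_zero, ← hξ₀]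
      ring
    · simp only [sq] at hAη ⊢
      rw [sum_hornStep_succ_mul hk]
      exact hAη a (by omega)

/-! ### Infinite orthogonal matrices -/

lemma HasSum.of_eq_of_sum_range_eq {f g : ℕ → ℝ} {a : ℝ} (hg : HasSum g a) {n : ℕ}
    (hfg : ∀ j, n ≤ j → f j = g j) (hsum : ∑ j ∈ range n, f j = ∑ j ∈ range n, g j) :
    HasSum f a := by
  rw [← hasSum_nat_add_iff' n] at hg ⊢
  rw [hsum]
  convert hg using 2 with j
  exact hfg _ (Nat.le_add_left n j)

lemma hasSum_sum_mul_sum {U : ℕ → ℕ → ℝ}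
    (hU : ∀ l l', HasSum (fun i => U i l * U i l') (if l = l' then 1 else 0))
    (s s' : Finset ℕ) (x y : ℕ → ℝ) :
    HasSum (fun i => (∑ l ∈ s, U i l * x l) * ∑ l' ∈ s', U i l' * y l')
      (∑ l ∈ s, ∑ l' ∈ s', x l * y l' * if l = l' then 1 else 0) := by
  simp_rw [sum_mul_sum]
  refine hasSum_sum fun l _ => hasSum_sum fun l' _ => ?_
  rw [show (fun i => U i l * x l * (U i l' * y l')) = fun i => x l * y l' * (U i l * U i l') by
    ext i; ring]
  exact (hU l l').mul_left _

/-- The product of `U` with the block-diagonal matrix `B ⊕ 1`, `B` an `n × n` block. -/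
def mulBlock (U : ℕ → ℕ → ℝ) (n : ℕ) (B : ℕ → ℕ → ℝ) : ℕ → ℕ → ℝ :=
  fun i j => if j < n then ∑ l ∈ range n, U i l * B l j else U i j

lemma orthogonalMatrix_mulBlock {U B : ℕ → ℕ → ℝ} {n : ℕ} (hU : OrthogonalMatrix U)
    (hB : IsOrthogonalOn n B) : OrthogonalMatrix (mulBlock U n B) := by
  have hcross : ∀ j < n, ∀ j', n ≤ j' →
      HasSum (fun i => mulBlock U n B i j * mulBlock U n B i j') 0 := by
    intro j hj j' hj'
    convert hasSum_sum_mul_sum hU.2 (range n) {j'} (B · j) 1 using 1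
    · ext i
      simp [mulBlock, hj, not_lt.2 hj']
    · refine (sum_eq_zero fun l hl => ?_).symm
      simp [((mem_range.1 hl).trans_le hj').ne]
  refine ⟨fun i i' => (hU.1 i i').of_eq_of_sum_range_eq (n := n) ?_ ?_, fun j j' => ?_⟩
  · intro j hj
    simp [mulBlock, not_lt.2 hj]
  · rw [← hB.sum_sum_mul_sum (U i) (U i')]
    exact sum_congr rfl fun j hj => by simp only [mulBlock, if_pos (mem_range.1 hj)]
  rcases lt_or_ge j n with hj | hj <;> rcases lt_or_ge j' n with hj' | hj'
  · convert hasSum_sum_mul_sum hU.2 (range n) (range n) (B · j) (B · j') using 1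
    · ext i
      simp [mulBlock, hj, hj']
    · simp only [mul_ite, mul_one, mul_zero, sum_ite_eq, mem_range]
      rw [sum_congr rfl fun l hl => if_pos (mem_range.1 hl)]
      exact (hB.transpose j hj j' hj').symm
  · simpa [show j ≠ j' by omega] using hcross j hj j' hj'
  · simpa [show j ≠ j' by omega, mul_comm] using hcross j' hj' j hj
  · simpa [mulBlock, not_lt.2 hj, not_lt.2 hj'] using hU.2 j j'

def householder (u : ℕ → ℝ) (r : ℝ) : ℕ → ℕ → ℝ :=
  fun i j => (if i = j then 1 else 0) - 2 / r * u i * u j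

lemma orthogonalMatrix_householder {u : ℕ → ℝ} {r : ℝ} (hu : HasSum (fun i => u i ^ 2) r) :
    OrthogonalMatrix (householder u r) := by
  have hrow : ∀ i i', HasSum (fun l => householder u r i l * householder u r i' l)
      (if i = i' then 1 else 0) := by
    intro i i'
    set c := 2 / r * u i * u i'
    have h : ∀ l, householder u r i l * householder u r i' l =
        ((if l = i then (if i = i' then 1 else 0) else 0) +
          ((if l = i then -c else 0) + (if l = i' then -c else 0))) +
          4 / r ^ 2 * u i * u i' * u l ^ 2 := by
      intro l
      simp only [householder, c]
      split_ifs <;> subst_vars <;> first | ring1 | simp_all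
    convert ((hasSum_ite_eq i (if i = i' then (1 : ℝ) else 0)).add
      ((hasSum_ite_eq i (-c)).add (hasSum_ite_eq i' (-c)))).add
      (hu.mul_left (4 / r ^ 2 * u i * u i')) using 1
    · exact funext h
    · rcases eq_or_ne r 0 with rfl | hr
      · simp [c]
      · simp only [c]
        field_simp
        ring
  refine ⟨hrow, fun j j' => ?_⟩
  have hsymm : ∀ i j, householder u r i j = householder u r j i := fun i j => by
    simp only [householder, eq_comm (a := i)]
    ring
  simpa only [hsymm j, hsymm j'] using hrow j j'

lemma exists_orthogonalMatrix_apply_eq {w : ℕ → ℝ} (hw : HasSum (fun i => w i ^ 2) 1) (p : ℕ) :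
    ∃ R, OrthogonalMatrix R ∧ (∀ i, R i p = w i) ∧
      ∀ i l, l ≠ p → w l = 0 → R i l = if i = l then 1 else 0 := by
  set u : ℕ → ℝ := fun i => (if i = p then 1 else 0) - w i
  have hu : HasSum (fun i => u i ^ 2) (2 * (1 - w p)) := by
    convert (hasSum_ite_eq p (1 - 2 * w p)).add hw using 1
    · ext i
      by_cases hi : i = p
      · simp only [u, hi, if_true]
        ring
      · simp only [u, hi, if_false]
        ring
    · ring
  refine ⟨householder u (2 * (1 - w p)), orthogonalMatrix_householder hu, fun i => ?_,
    fun i l hl hwl => by simp [householder, u, hl, hwl]⟩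
  by_cases hp : w p = 1
  · have hu0 : ∀ i, u i = 0 := fun i => by
      simpa using congr_fun ((hasSum_zero_iff_of_nonneg fun i => sq_nonneg (u i)).1
        (by simpa [hp] using hu)) i
    have := hu0 i
    simp only [householder, hu0, mul_zero, sub_zero]
    simp only [u] at this
    linarith
  · have hp' : 1 - w p ≠ 0 := sub_ne_zero.2 (Ne.symm hp)
    simp only [householder, u, if_true]
    field_simp
    split_ifs <;> ring

/-! ### Cutting `ξ` down to a finite majorization problem -/

lemma exists_support_eq_range {η : ℕ → ℝ} (hη0 : ∀ i, 0 ≤ η i) (hη : Antitone η)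
    (hfin : ∃ N, ∀ n, N ≤ n → η n = 0) :
    ∃ N, (∀ n, N ≤ n → η n = 0) ∧ ∀ j < N, 0 < η j := by
  classical
  obtain ⟨N, hN⟩ := hfin
  have hex : ∃ n, η n = 0 := ⟨N, hN N le_rfl⟩
  refine ⟨Nat.find hex, fun n hn => le_antisymm ((hη hn).trans_eq (Nat.find_spec hex)) (hη0 n),
    fun j hj => (hη0 j).lt_of_ne (Ne.symm (Nat.find_min hex hj))⟩

lemma SMaj.hasSum {ξ η : ℕ → ℝ} (h : SMaj ξ η) (hξ : ∀ i, 0 ≤ ξ i) {N : ℕ}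
    (hN : ∀ n, N ≤ n → η n = 0) : HasSum ξ (∑ j ∈ range N, η j) := by
  set S := ∑ j ∈ range N, η j
  have hηS : ∀ n, N ≤ n → ∑ j ∈ range n, η j = S := fun n hn => eventually_constant_sum hN hn
  obtain ⟨A, hA⟩ := summable_of_sum_range_le hξ fun n =>
    calc ∑ i ∈ range n, ξ i ≤ ∑ i ∈ range (n + N), ξ i :=
          sum_le_sum_of_subset_of_nonneg (range_mono (Nat.le_add_right n N)) fun i _ _ => hξ i
      _ ≤ S := (h.1 _).trans_eq (hηS _ (Nat.le_add_left N n))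
  have hlim : Tendsto (fun n => ∑ j ∈ range n, (η j - ξ j)) atTop (nhds (S - A)) := by
    simp_rw [sum_sub_distrib]
    exact (tendsto_atTop_of_eventually_const hηS).sub hA.tendsto_sum_nat
  have h0 : ((S - A : ℝ) : EReal) = 0 :=
    ((continuous_coe_real_ereal.tendsto _).comp hlim).liminf_eq.symm.trans h.2
  rw [sub_eq_zero.1 (EReal.coe_eq_zero.1 h0)]
  exact hA

lemma exists_forall_lt_sub_sum_range_le {ξ : ℕ → ℝ} {S : ℝ} (hS : HasSum ξ S) {η : ℕ → ℝ}
    {N : ℕ} (hη : ∀ j < N, 0 < η j) :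
    ∃ t ≥ N, ∀ j < N, S - ∑ i ∈ range t, ξ i ≤ η j := by
  have hlim : Tendsto (fun t => S - ∑ i ∈ range t, ξ i) atTop (nhds 0) := by
    simpa using (tendsto_const_nhds (x := S)).sub hS.tendsto_sum_nat
  have hev : ∀ᶠ t in atTop, ∀ j ∈ range N, S - ∑ i ∈ range t, ξ i ≤ η j :=
    (eventually_all_finset _).2 fun j hj =>
      ((tendsto_order.1 hlim).2 _ (hη j (mem_range.1 hj))).mono fun _ h => h.le
  obtain ⟨t, ht, hNt⟩ := (hev.and (eventually_ge_atTop N)).exists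
  exact ⟨t, hNt, fun j hj => ht j (mem_range.2 hj)⟩

def insertAt (p : ℕ) (x : ℝ) (f : ℕ → ℝ) : ℕ → ℝ :=
  fun i => if i < p then f i else if i = p then x else f (i - 1)

lemma insertAt_of_lt {p i : ℕ} (h : i < p) (x : ℝ) (f : ℕ → ℝ) : insertAt p x f i = f i :=
  if_pos h

lemma exists_antitone_insertAt {f : ℕ → ℝ} (hf : Antitone f) {x : ℝ} {t : ℕ} (ht : f t ≤ x) :
    ∃ p ≤ t, Antitone (insertAt p x f) := by
  classical
  have hex : ∃ i, f i ≤ x := ⟨t, ht⟩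
  refine ⟨Nat.find hex, Nat.find_min' hex ht, antitone_nat_of_succ_le fun i => ?_⟩
  have hlt : ∀ i < Nat.find hex, x < f i := fun i hi => lt_of_not_ge (Nat.find_min hex hi)
  rcases lt_trichotomy (i + 1) (Nat.find hex) with h | h | h
  · simp only [insertAt, h, show i < Nat.find hex by omega, if_true]
    exact hf (Nat.le_succ i)
  · simp only [insertAt, h, show i < Nat.find hex by omega, lt_irrefl, if_true, if_false]
    exact (hlt i (by omega)).le
  · rcases lt_or_eq_of_le (show Nat.find hex ≤ i by omega) with h' | h'
    · simp only [insertAt, show ¬ i < Nat.find hex by omega, show i ≠ Nat.find hex by omega,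
        show ¬ i + 1 < Nat.find hex by omega, show i + 1 ≠ Nat.find hex by omega, if_false]
      exact hf (by omega)
    · simpa [insertAt, ← h', show ¬ i + 1 < i by omega] using Nat.find_spec hex

lemma sum_range_succ_insertAt {p m : ℕ} (hpm : p ≤ m) (x : ℝ) (f : ℕ → ℝ) :
    ∑ i ∈ range (m + 1), insertAt p x f i = ∑ i ∈ range m, f i + x := by
  induction m, hpm using Nat.le_induction with
  | base =>
    rw [sum_range_succ, sum_congr rfl fun i hi => insertAt_of_lt (mem_range.1 hi) x f]
    simp [insertAt]
  | succ m hm ih =>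
    rw [sum_range_succ, ih, sum_range_succ]
    simp only [insertAt, show ¬ m + 1 < p by omega, show m + 1 ≠ p by omega, ↓reduceIte,
      add_tsub_cancel_right]
    ring

lemma sum_range_insertAt_le {ξ η : ℕ → ℝ} (hξ : ∀ i, 0 ≤ ξ i) (hη : ∀ i, 0 ≤ η i)
    (hmaj : Maj ξ η) {p t N : ℕ} {ρ : ℝ} (hρη : ∀ j < N, ρ ≤ η j)
    (hρ : ∑ i ∈ range t, ξ i + ρ = ∑ j ∈ range N, η j) :
    ∀ m ≤ t + 1, ∑ i ∈ range m, insertAt p ρ ξ i ≤ ∑ i ∈ range m, η i := by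
  intro m hm
  rcases le_or_gt m p with hmp | hmp
  · rw [sum_congr rfl fun i hi => insertAt_of_lt ((mem_range.1 hi).trans_le hmp) ρ ξ]
    exact hmaj m
  obtain ⟨m, rfl⟩ : ∃ m', m = m' + 1 := ⟨m - 1, by omega⟩
  rw [sum_range_succ_insertAt (by omega), sum_range_succ]
  rcases lt_or_ge m N with hmN | hmN
  · exact add_le_add (hmaj m) (hρη m hmN)
  · calc ∑ i ∈ range m, ξ i + ρ ≤ ∑ i ∈ range t, ξ i + ρ := add_le_add_left
          (sum_le_sum_of_subset_of_nonneg (range_mono (by omega)) fun i _ _ => hξ i) ρ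
      _ = ∑ j ∈ range N, η j := hρ
      _ ≤ ∑ j ∈ range (m + 1), η j :=
          sum_le_sum_of_subset_of_nonneg (range_mono (by omega)) fun i _ _ => hη i
      _ = _ := sum_range_succ _ _

lemma exists_isOrthogonalOn_of_insertAt {t p : ℕ} (hpt : p ≤ t) {A : ℕ → ℕ → ℝ}
    (hA : IsOrthogonalOn (t + 1) A) {ξ η : ℕ → ℝ} {ρ : ℝ}
    (hAη : ∀ i < t + 1, ∑ j ∈ range (t + 1), A i j ^ 2 * η j = insertAt p ρ ξ i) :
    ∃ B, IsOrthogonalOn (t + 1) B ∧ (∀ i < t, ∑ j ∈ range (t + 1), B i j ^ 2 * η j = ξ i) ∧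
      ∑ j ∈ range (t + 1), B t j ^ 2 * η j = ρ := by
  -- `σ` moves the row of `A` carrying `ρ` (row `p`) to the last place.
  set σ : ℕ → ℕ := fun i => if i < p then i else if i < t then i + 1 else p
  have hσ : ∀ i < t + 1, σ i < t + 1 := by
    intro i hi
    simp only [σ]
    split_ifs <;> omega
  refine ⟨fun i => A (σ i), fun i hi i' hi' => ?_, fun i hi => ?_, ?_⟩
  · rw [hA _ (hσ i hi) _ (hσ i' hi')]
    congr 1
    simp only [σ, eq_iff_iff]
    split_ifs <;> omega
  · rw [hAη _ (hσ i (by omega))]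
    simp only [σ, insertAt]
    split_ifs <;> first | rfl | omega
  · rw [hAη _ (hσ t (by omega))]
    simp [σ, insertAt, not_lt.2 hpt]

lemma exists_hasSum_sq_eq_one {ξ : ℕ → ℝ} (hξ : ∀ i, 0 ≤ ξ i) {t : ℕ} {ρ : ℝ}
    (hρ : HasSum (fun m => ξ (m + t)) ρ) :
    ∃ w : ℕ → ℝ, HasSum (fun i => w i ^ 2) 1 ∧ (∀ i < t, w i = 0) ∧
      ∀ i, t ≤ i → w i ^ 2 * ρ = ξ i := by
  rcases (hρ.nonneg fun m => hξ _).eq_or_lt with rfl | hρ0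
  · have h0 := (hasSum_zero_iff_of_nonneg fun m => hξ (m + t)).1 hρ
    refine ⟨fun i => if i = t then 1 else 0, by simpa using hasSum_ite_eq t (1 : ℝ),
      fun i hi => if_neg (by omega), fun i hi => ?_⟩
    simpa [Nat.sub_add_cancel hi, eq_comm] using congr_fun h0 (i - t)
  · have hsq : ∀ i, √(ξ i / ρ) ^ 2 = ξ i / ρ :=
      fun i => Real.sq_sqrt (div_nonneg (hξ i) hρ0.le)
    refine ⟨fun i => if t ≤ i then √(ξ i / ρ) else 0, ?_, fun i hi => if_neg (by omega),
      fun i hi => by simp [hi, hsq, hρ0.ne']⟩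
    rw [← hasSum_nat_add_iff' t, sum_eq_zero fun i hi => by simp [mem_range.1 hi], sub_zero]
    have h := hρ.div_const ρ
    rw [div_self hρ0.ne'] at h
    simpa [hsq] using h

lemma exists_orthogonalMatrix_of_block {t : ℕ} {B : ℕ → ℕ → ℝ} (hB : IsOrthogonalOn (t + 1) B)
    {ξ η w : ℕ → ℝ} {ρ : ℝ} (hBξ : ∀ i < t, ∑ j ∈ range (t + 1), B i j ^ 2 * η j = ξ i)
    (hBρ : ∑ j ∈ range (t + 1), B t j ^ 2 * η j = ρ) (hη : ∀ j, t + 1 ≤ j → η j = 0)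
    (hw : HasSum (fun i => w i ^ 2) 1) (hw0 : ∀ i < t, w i = 0)
    (hwξ : ∀ i, t ≤ i → w i ^ 2 * ρ = ξ i) :
    ∃ U, OrthogonalMatrix U ∧ ∀ i, HasSum (fun j => U i j ^ 2 * η j) (ξ i) := by
  obtain ⟨R, hR, hRt, hRl⟩ := exists_orthogonalMatrix_apply_eq hw t
  -- `R` fixes `e_l` for `l < t` and sends `e_t` to `w`, so row `i` of `R (B ⊕ 1)` is row `i`
  -- of `B` for `i < t` and `w i` times row `t` of `B` for `i ≥ t`.
  refine ⟨mulBlock R (t + 1) B, orthogonalMatrix_mulBlock hR hB, fun i => ?_⟩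
  have hU : ∀ j < t + 1,
      mulBlock R (t + 1) B i j = (if i < t then B i j else 0) + w i * B t j := by
    intro j hj
    simp only [mulBlock, if_pos hj, sum_range_succ, hRt]
    congr 1
    rw [sum_congr rfl fun l hl => by
      rw [hRl i l (by simp at hl; omega) (hw0 l (mem_range.1 hl))]]
    simp [ite_mul]
  have h : HasSum (fun j => mulBlock R (t + 1) B i j ^ 2 * η j)
      (∑ j ∈ range (t + 1), mulBlock R (t + 1) B i j ^ 2 * η j) :=
    hasSum_sum_of_ne_finset_zero fun j hj => by simp [hη j (by simpa using hj)]
  convert h using 1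
  rw [sum_congr rfl fun j hj => by rw [hU j (mem_range.1 hj)]]
  rcases lt_or_ge i t with hi | hi
  · simp [hi, hw0 i hi, hBξ i hi]
  · simp only [not_lt.2 hi, if_false, zero_add, mul_pow, mul_assoc, ← mul_sum, hBρ, hwξ i hi]

/-- If `ξ, η ∈ c₀*`, `ξ ≼ η`, and `η` has finite support, then
`ξ = Qη` for some orthostochastic matrix `Q`. -/
theorem stmt_2 (ξ η : ℕ → ℝ) (hξ : IsCoStar ξ) (hη : IsCoStar η)
    (hmaj : SMaj ξ η) (hfin : ∃ N : ℕ, ∀ n, N ≤ n → η n = 0) :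
    ∃ Q : ℕ → ℕ → ℝ, Orthostochastic Q ∧
      ∀ i, HasSum (fun j => Q i j * η j) (ξ i) := by
  obtain ⟨hξ0, hξa, -⟩ := hξ
  obtain ⟨hη0, hηa, -⟩ := hη
  obtain ⟨N, hN, hNpos⟩ := exists_support_eq_range hη0 hηa hfin
  have hS := hmaj.hasSum hξ0 hN
  obtain ⟨t, hNt, hρη⟩ := exists_forall_lt_sub_sum_range_le hS hNpos
  set ρ := ∑ j ∈ range N, η j - ∑ i ∈ range t, ξ i
  have hρ : HasSum (fun m => ξ (m + t)) ρ := (hasSum_nat_add_iff' t).2 hS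
  obtain ⟨p, hpt, hζ⟩ :=
    exists_antitone_insertAt hξa (by simpa using le_hasSum hρ 0 fun m _ => hξ0 _)
  obtain ⟨A, hA, hAζ⟩ := exists_isOrthogonalOn_sum_sq_mul_eq (t + 1) hζ hηa
    (sum_range_insertAt_le hξ0 hη0 hmaj.1 hρη (by ring))
    (by rw [sum_range_succ_insertAt hpt, eventually_constant_sum hN (by omega : N ≤ t + 1)]; ring)
  obtain ⟨B, hB, hBξ, hBρ⟩ := exists_isOrthogonalOn_of_insertAt hpt hA hAζ
  obtain ⟨w, hw, hw0, hwξ⟩ := exists_hasSum_sq_eq_one hξ0 hρ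
  obtain ⟨U, hU, hUξ⟩ := exists_orthogonalMatrix_of_block hB hBξ hBρ
    (fun j hj => hN j (by omega)) hw hw0 hwξ
  exact ⟨fun i j => U i j ^ 2, ⟨U, hU, fun _ _ => rfl⟩, hUξ⟩

end
end

section
/- Let P be a substochastic matrix and let η ∈ c₀* with η_n > 0 for all n. If liminf_{n→∞} ∑_{i=1}^n (η_i − (Pη)_i) = 0, then P is column-stochastic, i.e., ∑_{i=1}^∞ P_{ij} = 1 for every j. -/
/-! If the column sum `s_j = ∑_i P_ij` were `< 1`, then for `n > j` every row satisfies
`(Pη)_i ≤ η_n + ∑_{k<n} P_ik (η_k - η_n)` (the mass beyond `n` sees at most `η_n`), so summing over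
`i < n` gives `∑_{i<n} (η_i - (Pη)_i) ≥ (1 - s_j)(η_j - η_n)`. As `η_n → 0` the liminf is then at
least `(1 - s_j) η_j > 0`. -/

noncomputable section

open Filter Finset

/-- A matrix (indexed by `ℕ × ℕ`) is substochastic if its entries are nonnegative and
all of its row sums and column sums are bounded by `1`. -/
def Substochastic (P : ℕ → ℕ → ℝ) : Prop :=
  (∀ i j, 0 ≤ P i j) ∧
  (∀ i, ∀ s : Finset ℕ, ∑ j ∈ s, P i j ≤ 1) ∧
  (∀ j, ∀ s : Finset ℕ, ∑ i ∈ s, P i j ≤ 1)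

lemma tsum_mul_le_add_sum_range_mul_sub {p η : ℕ → ℝ} (hp0 : ∀ j, 0 ≤ p j)
    (hp1 : ∀ s : Finset ℕ, ∑ j ∈ s, p j ≤ 1) (hη0 : ∀ j, 0 ≤ η j) (hη : Antitone η) (n : ℕ) :
    ∑' j, p j * η j ≤ η n + ∑ j ∈ range n, p j * (η j - η n) := by
  have hp : Summable p := summable_of_sum_le hp0 hp1
  have hpη : Summable fun j => p j * η j :=
    (hp.mul_right (η 0)).of_nonneg_of_le (fun j => mul_nonneg (hp0 j) (hη0 j))
      (fun j => mul_le_mul_of_nonneg_left (hη (Nat.zero_le j)) (hp0 j))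
  have htail : ∑' j, p (j + n) * η (j + n) ≤ (∑' j, p (j + n)) * η n := by
    rw [← tsum_mul_right]
    exact Summable.tsum_le_tsum
      (fun j => mul_le_mul_of_nonneg_left (hη (Nat.le_add_left n j)) (hp0 _))
      ((summable_nat_add_iff n).2 hpη) (((summable_nat_add_iff n).2 hp).mul_right _)
  have hmass : (∑ j ∈ range n, p j + ∑' j, p (j + n)) * η n ≤ η n := by
    rw [hp.sum_add_tsum_nat_add n]
    exact mul_le_of_le_one_left (hη0 n) (hp.tsum_le_of_sum_le hp1)
  have hhead : ∑ j ∈ range n, p j * (η j - η n)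
      = ∑ j ∈ range n, p j * η j - (∑ j ∈ range n, p j) * η n := by
    rw [sum_mul, ← sum_sub_distrib]
    simp only [mul_sub]
  rw [← hpη.sum_add_tsum_nat_add n, hhead]
  linarith

namespace Substochastic

variable {P : ℕ → ℕ → ℝ} {η : ℕ → ℝ}

lemma sum_range_mul_sub_le (hP : Substochastic P) (hη0 : ∀ j, 0 ≤ η j) (hη : Antitone η)
    (n : ℕ) :
    ∑ j ∈ range n, (1 - ∑ i ∈ range n, P i j) * (η j - η n)
      ≤ ∑ i ∈ range n, (η i - ∑' j, P i j * η j) := by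
  calc ∑ j ∈ range n, (1 - ∑ i ∈ range n, P i j) * (η j - η n)
      = ∑ i ∈ range n, (η i - (η n + ∑ j ∈ range n, P i j * (η j - η n))) := by
        simp only [sub_mul, one_mul, sum_mul, sum_sub_distrib, sum_add_distrib]
        rw [sum_comm]
        ring
    _ ≤ ∑ i ∈ range n, (η i - ∑' j, P i j * η j) :=
        sum_le_sum fun i _ => sub_le_sub_left
          (tsum_mul_le_add_sum_range_mul_sub (hP.1 i) (hP.2.1 i) hη0 hη n) _

lemma one_sub_tsum_mul_le (hP : Substochastic P) (hη0 : ∀ j, 0 ≤ η j) (hη : Antitone η)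
    {j n : ℕ} (hjn : j < n) :
    (1 - ∑' i, P i j) * (η j - η n) ≤ ∑ i ∈ range n, (η i - ∑' k, P i k * η k) := by
  have hcol : ∑ i ∈ range n, P i j ≤ ∑' i, P i j :=
    (summable_of_sum_le (fun i => hP.1 i j) (hP.2.2 j)).sum_le_tsum _ fun i _ => hP.1 i j
  calc (1 - ∑' i, P i j) * (η j - η n)
      ≤ (1 - ∑ i ∈ range n, P i j) * (η j - η n) :=
        mul_le_mul_of_nonneg_right (by linarith) (sub_nonneg.2 (hη hjn.le))
    _ ≤ ∑ k ∈ range n, (1 - ∑ i ∈ range n, P i k) * (η k - η n) :=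
        single_le_sum (f := fun k => (1 - ∑ i ∈ range n, P i k) * (η k - η n))
          (fun k hk => mul_nonneg (sub_nonneg.2 (hP.2.2 k _))
            (sub_nonneg.2 (hη (mem_range.1 hk).le)))
          (mem_range.2 hjn)
    _ ≤ _ := hP.sum_range_mul_sub_le hη0 hη n

end Substochastic

/-- If `P` is substochastic, `η ∈ c₀*` with `η_n > 0` for all `n`, and
`liminf_n ∑_{i<n} (η_i − (Pη)_i) = 0`, then `P` is column-stochastic. -/
theorem stmt_3 (P : ℕ → ℕ → ℝ) (hP : Substochastic P)
    (η : ℕ → ℝ) (hη : IsCoStar η) (hpos : ∀ n, 0 < η n)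
    (h : liminf
        (fun n => ((∑ i ∈ range n, (η i - ∑' j, P i j * η j) : ℝ) : EReal)) atTop = 0) :
    ∀ j, HasSum (fun i => P i j) (1 : ℝ) := by
  obtain ⟨hη0, hanti, hlim⟩ := hη
  intro j
  have hcol : Summable fun i => P i j := summable_of_sum_le (fun i => hP.1 i j) (hP.2.2 j)
  have hbound : Tendsto (fun n => (((1 - ∑' i, P i j) * (η j - η n) : ℝ) : EReal)) atTop
      (nhds (((1 - ∑' i, P i j) * η j : ℝ) : EReal)) := by
    rw [EReal.tendsto_coe]
    simpa using (tendsto_const_nhds.sub hlim).const_mul (1 - ∑' i, P i j)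
  have hdeficit : (1 - ∑' i, P i j) * η j ≤ 0 := by
    rw [← EReal.coe_nonpos, ← h, ← hbound.liminf_eq]
    exact liminf_le_liminf ((eventually_gt_atTop j).mono fun n hn =>
      EReal.coe_le_coe_iff.2 (hP.one_sub_tsum_mul_le hη0 hanti hn))
  refine hcol.hasSum_iff.2 (le_antisymm (hcol.tsum_le_of_sum_le (hP.2.2 j)) ?_)
  nlinarith [hpos j]

end
end

section
/- Let ξ, η ∈ c₀* and suppose ξ = Pη for some column-stochastic matrix P. If ξ is summable or η is summable, then both are summable, ∑_{j=1}^∞ ξ_j = ∑_{j=1}^∞ η_j, and ξ ≼ η. -/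
noncomputable section

open Filter Finset

/-! Viewing `ξ = Pη` in `[0, ∞]`, Tonelli lets us sum `P i j * η j` over `i` first; since the
columns of `P` sum to `1`, this gives `∑ ξ = ∑ η` as extended reals, so summability and the value
of the sum transfer between `ξ` and `η`. For majorization, `∑_{i<n} ξ i = ∑_j c j * η j` with
weights `c j = ∑_{i<n} P i j ∈ [0, 1]` of total mass at most `n`, and against a nonincreasing `η`
such weights do best by putting mass `1` on each of the first `n` indices. Equal sums then force the
partial sums of `η - ξ` to tend to `0`. -/

section NonnegSeries

variable {α : Type*} {f : α → ℝ}

theorem summable_iff_tsum_ofReal_ne_top (hf : ∀ a, 0 ≤ f a) :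
    Summable f ↔ ∑' a, ENNReal.ofReal (f a) ≠ ⊤ := by
  refine ⟨Summable.tsum_ofReal_ne_top, fun h => ?_⟩
  simpa only [ENNReal.toReal_ofReal (hf _)] using ENNReal.summable_toReal h

theorem tsum_eq_toReal_tsum_ofReal (hf : ∀ a, 0 ≤ f a) :
    ∑' a, f a = (∑' a, ENNReal.ofReal (f a)).toReal := by
  by_cases hs : Summable f
  · rw [← ENNReal.ofReal_tsum_of_nonneg hf hs, ENNReal.toReal_ofReal (tsum_nonneg hf)]
  · rw [tsum_eq_zero_of_not_summable hs,
      not_ne_iff.mp (mt (summable_iff_tsum_ofReal_ne_top hf).mpr hs), ENNReal.toReal_top]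

end NonnegSeries

theorem hasSum_mul_le_sum_range {c η : ℕ → ℝ} {s t : ℝ} {n : ℕ}
    (hc0 : ∀ j, 0 ≤ c j) (hc1 : ∀ j, c j ≤ 1) (hηa : Antitone η) (hηn : 0 ≤ η n)
    (hc : HasSum c s) (hcη : HasSum (fun j => c j * η j) t) (hs : s ≤ n) :
    t ≤ ∑ j ∈ range n, η j := by
  set δ : ℕ → ℝ := fun j => if j ∈ range n then 1 else 0
  have hδ : HasSum δ n := by
    convert hasSum_sum_of_ne_finset_zero (L := .unconditional ℕ) (f := δ) (s := range n)
      (fun j hj => if_neg hj) using 1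
    rw [sum_congr rfl fun j hj => if_pos hj, sum_const, card_range, nsmul_one]
  have hδη : HasSum (fun j => δ j * η j) (∑ j ∈ range n, η j) := by
    convert hasSum_sum_of_ne_finset_zero (L := .unconditional ℕ) (f := fun j => δ j * η j)
      (s := range n) (fun j hj => by simp only [δ, if_neg hj, zero_mul]) using 1
    exact sum_congr rfl fun j hj => by simp only [δ, if_pos hj, one_mul]
  -- the correction term `(c j - δ j) * η n` sums to `(s - n) * η n ≤ 0`
  have hbound : ∀ j, c j * η j ≤ δ j * η j + (c j - δ j) * η n := by
    intro j
    by_cases hj : j < n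
    · have := hηa hj.le
      simp only [δ, mem_range, hj, if_true]
      nlinarith [hc1 j]
    · have := hηa (not_lt.mp hj)
      simp only [δ, mem_range, hj, if_false]
      nlinarith [hc0 j]
  have := hasSum_le hbound hcη (hδη.add ((hc.sub hδ).mul_right (η n)))
  nlinarith

theorem Substochastic.maj {P : ℕ → ℕ → ℝ} (hP : Substochastic P) {ξ η : ℕ → ℝ}
    (hη0 : ∀ j, 0 ≤ η j) (hηa : Antitone η) (heq : ∀ i, HasSum (fun j => P i j * η j) (ξ i)) :
    Maj ξ η := by
  obtain ⟨hP0, hProw, hPcol⟩ := hP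
  intro n
  have hrow : ∀ i, HasSum (fun j => P i j) (∑' j, P i j) := fun i =>
    (summable_of_sum_le (hP0 i) (hProw i)).hasSum
  refine hasSum_mul_le_sum_range (c := fun j => ∑ i ∈ range n, P i j)
    (fun j => sum_nonneg fun i _ => hP0 i j) (fun j => hPcol j _) hηa (hη0 n)
    (hasSum_sum fun i _ => hrow i) ?_ ?_
  · simpa only [sum_mul] using hasSum_sum fun i _ => heq i
  · calc ∑ i ∈ range n, ∑' j, P i j ≤ ∑ i ∈ range n, (1 : ℝ) :=
          sum_le_sum fun i _ => tsum_le_of_sum_le' zero_le_one (hProw i)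
      _ = n := by simp

theorem tsum_ofReal_eq_of_hasSum_mul {P : ℕ → ℕ → ℝ} {ξ η : ℕ → ℝ} (hP0 : ∀ i j, 0 ≤ P i j)
    (hcol : ∀ j, HasSum (fun i => P i j) 1) (hη0 : ∀ j, 0 ≤ η j)
    (heq : ∀ i, HasSum (fun j => P i j * η j) (ξ i)) :
    ∑' i, ENNReal.ofReal (ξ i) = ∑' j, ENNReal.ofReal (η j) := by
  have hrow : ∀ i, ∑' j, ENNReal.ofReal (P i j * η j) = ENNReal.ofReal (ξ i) := fun i => by
    rw [← ENNReal.ofReal_tsum_of_nonneg (fun j => mul_nonneg (hP0 i j) (hη0 j))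
      (heq i).summable, (heq i).tsum_eq]
  have hcolumn : ∀ j, ∑' i, ENNReal.ofReal (P i j * η j) = ENNReal.ofReal (η j) := fun j => by
    simp only [ENNReal.ofReal_mul (hP0 _ j), ENNReal.tsum_mul_right,
      ← ENNReal.ofReal_tsum_of_nonneg (fun i => hP0 i j) (hcol j).summable, (hcol j).tsum_eq,
      ENNReal.ofReal_one, one_mul]
  calc ∑' i, ENNReal.ofReal (ξ i) = ∑' i, ∑' j, ENNReal.ofReal (P i j * η j) := by
        simp only [hrow]
    _ = ∑' j, ∑' i, ENNReal.ofReal (P i j * η j) := ENNReal.tsum_comm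
    _ = ∑' j, ENNReal.ofReal (η j) := by simp only [hcolumn]

theorem Maj.smaj_of_tsum_eq {ξ η : ℕ → ℝ} (h : Maj ξ η) (hξ : Summable ξ) (hη : Summable η)
    (hsum : ∑' j, ξ j = ∑' j, η j) : SMaj ξ η := by
  refine ⟨h, Tendsto.liminf_eq ?_⟩
  have := (hη.hasSum.sub hξ.hasSum).tendsto_sum_nat
  rw [hsum, sub_self] at this
  exact EReal.tendsto_coe.mpr this

theorem stmt_4_general (ξ η : ℕ → ℝ) (hη : IsCoStar η)
    (P : ℕ → ℕ → ℝ) (hP : Substochastic P)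
    (hcol : ∀ j, HasSum (fun i => P i j) (1 : ℝ))
    (heq : ∀ i, HasSum (fun j => P i j * η j) (ξ i))
    (hsum : Summable ξ ∨ Summable η) :
    Summable ξ ∧ Summable η ∧ (∑' j, ξ j) = (∑' j, η j) ∧ SMaj ξ η := by
  obtain ⟨hη0, hηa, -⟩ := hη
  have hξ0 : ∀ i, 0 ≤ ξ i := fun i => (heq i).nonneg fun j => mul_nonneg (hP.1 i j) (hη0 j)
  have hofReal := tsum_ofReal_eq_of_hasSum_mul hP.1 hcol hη0 heq
  have hsummable : Summable ξ ↔ Summable η := by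
    rw [summable_iff_tsum_ofReal_ne_top hξ0, summable_iff_tsum_ofReal_ne_top hη0, hofReal]
  have htsum : ∑' j, ξ j = ∑' j, η j := by
    rw [tsum_eq_toReal_tsum_ofReal hξ0, tsum_eq_toReal_tsum_ofReal hη0, hofReal]
  have hξs : Summable ξ := hsum.elim id hsummable.mpr
  have hηs : Summable η := hsum.elim hsummable.mp id
  exact ⟨hξs, hηs, htsum, (hP.maj hη0 hηa heq).smaj_of_tsum_eq hξs hηs htsum⟩

/-- If `ξ, η ∈ c₀*` and `ξ = Pη` for a column-stochastic matrix `P`, then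
summability of `ξ` or of `η` implies both are summable with equal sums and `ξ ≼ η`. -/
theorem stmt_4 (ξ η : ℕ → ℝ) (hξ : IsCoStar ξ) (hη : IsCoStar η)
    (P : ℕ → ℕ → ℝ) (hP : Substochastic P)
    (hcol : ∀ j, HasSum (fun i => P i j) (1 : ℝ))
    (heq : ∀ i, HasSum (fun j => P i j * η j) (ξ i))
    (hsum : Summable ξ ∨ Summable η) :
    Summable ξ ∧ Summable η ∧ (∑' j, ξ j) = (∑' j, η j) ∧ SMaj ξ η :=
  stmt_4_general ξ η hη P hP hcol heq hsum

end
end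

section
/- Let ω be the harmonic sequence, ω_n = 1/n. There exists an orthostochastic matrix Q such that the sequence Qω (with (Qω)_i = ∑_{j=1}^∞ Q_{ij} ω_j) is nonincreasing and liminf_{n→∞} ∑_{j=1}^n (ω_j − (Qω)_j) > 0; in particular Qω is majorized but not strongly majorized by ω. -/
/-!
Group the terms of `ω` (1-based) into the pairs `1/m, 1/(2m)` with `m` odd and the
singletons `1/(4k)`. A 45° rotation of each pair turns it into two entries `3/(4m)`; listed
in decreasing order, the values come in periods of eight rows, from `m = 6K+1, 6K+3, 6K+5`
and `4k = 8K+4, 8K+8`. So `Qω` is nonincreasing for a block-diagonal orthogonal `U` whose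
columns are permuted. For `K ≥ 1` the partial sums of `ω - Qω` drop by less than
`1/(1000 K (K+1))` over the `K`-th period, which telescopes: from the value `3/70` at `n = 8`
they stay above `3/70 - 1/1000`, and the fluctuation inside a period costs at most `3/140`.
-/
noncomputable section

open Filter Finset

/-- The harmonic sequence `ω_n = 1/n` (here `0`-indexed: `ω n = 1/(n+1)`). -/
noncomputable def harmonic' (n : ℕ) : ℝ := 1 / (n + 1 : ℝ)

section PairRotation

variable {ι : Type*} [LinearOrder ι] {p : ι → ι}

/-- For an involution `p`: the identity on the fixed points of `p` and the rotation
`[[1, 1], [1, -1]] / √2` on each pair `{i < p i}`. -/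
def pairRotation (p : ι → ι) (i c : ι) : ℝ :=
  if p i = i then (if c = i then 1 else 0)
  else if c = p i then (√2)⁻¹ else if c = i then (if i < p i then (√2)⁻¹ else -(√2)⁻¹) else 0

lemma pairRotation_of_ne (i : ι) {c : ι} (hi : c ≠ i) (hpi : c ≠ p i) :
    pairRotation p i c = 0 := by
  simp [pairRotation, hi, hpi]

lemma pairRotation_self_of_ne {i : ι} (h : p i ≠ i) :
    pairRotation p i i = if i < p i then (√2)⁻¹ else -(√2)⁻¹ := by
  simp [pairRotation, h, Ne.symm h]

lemma pairRotation_partner {i : ι} (h : p i ≠ i) : pairRotation p i (p i) = (√2)⁻¹ := by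
  simp [pairRotation, h]

lemma pairRotation_partner_self (hp : Function.Involutive p) {i : ι} (h : p i ≠ i) :
    pairRotation p (p i) i = (√2)⁻¹ := by
  simpa [hp i] using pairRotation_partner (p := p) (i := p i) (by rwa [hp i, ne_comm])

lemma pairRotation_symm (hp : Function.Involutive p) (i c : ι) :
    pairRotation p i c = pairRotation p c i := by
  by_cases hci : c = i
  · rw [hci]
  by_cases hc : c = p i
  · subst hc
    rw [pairRotation_partner hci, pairRotation_partner_self hp hci]
  · have : i ≠ p c := fun h => hc (by rw [h, hp c])
    rw [pairRotation_of_ne i hci hc, pairRotation_of_ne c (Ne.symm hci) this]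

lemma hasSum_pairRotation_sq_mul (g : ι → ℝ) (i : ι) :
    HasSum (fun c => pairRotation p i c ^ 2 * g c)
      (if p i = i then g i else (g i + g (p i)) / 2) := by
  have hsupp : ∀ c ∉ ({i, p i} : Finset ι), pairRotation p i c ^ 2 * g c = 0 := by
    intro c hc
    simp only [mem_insert, mem_singleton, not_or] at hc
    simp [pairRotation_of_ne i hc.1 hc.2]
  convert hasSum_sum_of_ne_finset_zero (L := .unconditional ι) hsupp using 1
  by_cases h : p i = i
  · simp [h, pairRotation]
  · rw [sum_pair (Ne.symm h), pairRotation_self_of_ne h, pairRotation_partner h, if_neg h]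
    have : (√2)⁻¹ ^ 2 = (2 : ℝ)⁻¹ := by simp
    split_ifs <;> simp only [neg_sq, this] <;> ring

lemma pairRotation_mul_eq_zero (hp : Function.Involutive p) {i i' : ι} (hi : i ≠ i')
    (hpi : i' ≠ p i) (c : ι) : pairRotation p i c * pairRotation p i' c = 0 := by
  by_cases hc : c = i ∨ c = p i
  · have hc' : c ≠ i' := by rintro rfl; rcases hc with rfl | rfl <;> simp_all
    have hpc' : c ≠ p i' := by
      rintro rfl
      rcases hc with h | h
      · exact hpi (by rw [← h, hp])
      · exact hi (by rw [← hp i', h, hp])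
    rw [pairRotation_of_ne i' hc' hpc', mul_zero]
  · push Not at hc
    rw [pairRotation_of_ne i hc.1 hc.2, zero_mul]

lemma hasSum_pairRotation_mul (hp : Function.Involutive p) (i i' : ι) :
    HasSum (fun c => pairRotation p i c * pairRotation p i' c) (if i = i' then 1 else 0) := by
  rcases eq_or_ne i i' with rfl | hi
  · convert hasSum_pairRotation_sq_mul (p := p) 1 i using 1
    · simp [sq]
    · simp only [if_true]
      split_ifs <;> norm_num
  rw [if_neg hi]
  rcases eq_or_ne i' (p i) with rfl | hpi
  · have hsupp : ∀ c ∉ ({i, p i} : Finset ι),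
        pairRotation p i c * pairRotation p (p i) c = 0 := by
      intro c hc
      simp only [mem_insert, mem_singleton, not_or] at hc
      simp [pairRotation_of_ne i hc.1 hc.2]
    convert hasSum_sum_of_ne_finset_zero (L := .unconditional ι) hsupp using 1
    have hpp : p (p i) ≠ p i := by rwa [hp i]
    rw [sum_pair hi, pairRotation_self_of_ne (Ne.symm hi), pairRotation_partner (Ne.symm hi),
      pairRotation_partner_self hp (Ne.symm hi), pairRotation_self_of_ne hpp, hp i]
    rcases lt_or_gt_of_ne hi with h | h <;> simp [h, h.not_gt]
  · simpa using hasSum_zero.congr_fun (pairRotation_mul_eq_zero hp hi hpi)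

end PairRotation

lemma OrthogonalMatrix.comp_equiv {V : ℕ → ℕ → ℝ} (hV : OrthogonalMatrix V) (e : ℕ ≃ ℕ) :
    OrthogonalMatrix fun i j => V i (e j) := by
  refine ⟨fun i i' => (e.hasSum_iff (f := fun c => V i c * V i' c)).2 (hV.1 i i'), fun j j' => ?_⟩
  simpa only [e.injective.eq_iff] using hV.2 (e j) (e j')

lemma orthogonalMatrix_pairRotation {p : ℕ → ℕ} (hp : Function.Involutive p) :
    OrthogonalMatrix (pairRotation p) := by
  refine ⟨hasSum_pairRotation_mul hp, fun j j' => ?_⟩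
  simpa only [pairRotation_symm hp _ j, pairRotation_symm hp _ j'] using
    hasSum_pairRotation_mul hp j j'

namespace HarmonicMixing

def periodPairing (i : ℕ) : ℕ :=
  if i % 8 = 0 ∨ i % 8 = 2 ∨ i % 8 = 5 then i + 1
  else if i % 8 = 1 ∨ i % 8 = 3 ∨ i % 8 = 6 then i - 1 else i

lemma periodPairing_involutive : Function.Involutive periodPairing := by
  intro i
  unfold periodPairing
  split_ifs <;> omega

/-- In 1-based terms `n = j + 1`: columns `8K, 8K+1` carry `n = m, 2m` for `m = 6K+1`, likewise
`8K+2, 8K+3` and `8K+5, 8K+6` for `m = 6K+3, 6K+5`, and `8K+4, 8K+7` carry `n = 8K+4, 8K+8`. -/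
def harmonicIndexFun (c : ℕ) : ℕ :=
  if c % 8 = 0 then 6 * (c / 8) else if c % 8 = 1 then 12 * (c / 8) + 1
  else if c % 8 = 2 then 6 * (c / 8) + 2 else if c % 8 = 3 then 12 * (c / 8) + 5
  else if c % 8 = 4 then 8 * (c / 8) + 3 else if c % 8 = 5 then 6 * (c / 8) + 4
  else if c % 8 = 6 then 12 * (c / 8) + 9 else 8 * (c / 8) + 7

def harmonicIndexInv (j : ℕ) : ℕ :=
  if j % 6 = 0 then 8 * (j / 6) else if j % 12 = 1 then 8 * (j / 12) + 1
  else if j % 6 = 2 then 8 * (j / 6) + 2 else if j % 12 = 5 then 8 * (j / 12) + 3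
  else if j % 8 = 3 then 8 * (j / 8) + 4 else if j % 6 = 4 then 8 * (j / 6) + 5
  else if j % 12 = 9 then 8 * (j / 12) + 6 else 8 * (j / 8) + 7

set_option maxHeartbeats 1000000 in
lemma harmonicIndexInv_harmonicIndexFun (c : ℕ) : harmonicIndexInv (harmonicIndexFun c) = c := by
  unfold harmonicIndexFun
  split_ifs <;> unfold harmonicIndexInv <;> split_ifs <;> omega

set_option maxHeartbeats 1000000 in
lemma harmonicIndexFun_harmonicIndexInv (j : ℕ) : harmonicIndexFun (harmonicIndexInv j) = j := by
  unfold harmonicIndexInv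
  split_ifs <;> unfold harmonicIndexFun <;> split_ifs <;> omega

def harmonicIndex : ℕ ≃ ℕ :=
  ⟨harmonicIndexFun, harmonicIndexInv, harmonicIndexInv_harmonicIndexFun,
    harmonicIndexFun_harmonicIndexInv⟩

def mixingMatrix (i j : ℕ) : ℝ := pairRotation periodPairing i (harmonicIndex.symm j)

lemma orthogonalMatrix_mixingMatrix : OrthogonalMatrix mixingMatrix :=
  (orthogonalMatrix_pairRotation periodPairing_involutive).comp_equiv harmonicIndex.symm

/-- The entries `8K, …, 8K+7` of `Qω`. -/
def periodValue (K : ℕ) : ℕ → ℝ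
  | 0 | 1 => 3 / (4 * (6 * K + 1))
  | 2 | 3 => 3 / (4 * (6 * K + 3))
  | 4 => 1 / (8 * K + 4)
  | 5 | 6 => 3 / (4 * (6 * K + 5))
  | _ => 1 / (8 * K + 8)

def imageValue (i : ℕ) : ℝ := periodValue (i / 8) (i % 8)

lemma imageValue_eight_mul_add (K : ℕ) {r : ℕ} (hr : r < 8) :
    imageValue (8 * K + r) = periodValue K r := by
  rw [imageValue, show (8 * K + r) / 8 = K by omega, show (8 * K + r) % 8 = r by omega]

lemma pairAverage_eq_imageValue (i : ℕ) :
    (if periodPairing i = i then harmonic' (harmonicIndex i) else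
      (harmonic' (harmonicIndex i) + harmonic' (harmonicIndex (periodPairing i))) / 2) =
      imageValue i := by
  obtain ⟨K, r, hr, rfl⟩ : ∃ K r, r < 8 ∧ i = 8 * K + r := ⟨i / 8, i % 8, by omega, by omega⟩
  rw [imageValue_eight_mul_add K hr]
  have hmod : ∀ s < 8, (8 * K + s) % 8 = s := by omega
  have hdiv : ∀ s < 8, (8 * K + s) / 8 = K := by omega
  interval_cases r <;>
    simp [harmonicIndex, periodPairing, harmonicIndexFun, periodValue, harmonic', hmod, hdiv,
      add_assoc] <;>
    field_simp <;> ring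

lemma hasSum_mixingMatrix_sq_mul_harmonic (i : ℕ) :
    HasSum (fun j => mixingMatrix i j ^ 2 * harmonic' j) (imageValue i) := by
  rw [← pairAverage_eq_imageValue]
  have h := hasSum_pairRotation_sq_mul (p := periodPairing) (harmonic' ∘ harmonicIndex) i
  rw [← harmonicIndex.symm.hasSum_iff] at h
  simpa [mixingMatrix, Function.comp_def] using h

lemma antitone_imageValue : Antitone imageValue := by
  refine antitone_nat_of_succ_le fun i => ?_
  obtain ⟨K, r, hr, rfl⟩ : ∃ K r, r < 8 ∧ i = 8 * K + r := ⟨i / 8, i % 8, by omega, by omega⟩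
  rcases (by omega : r < 7 ∨ r = 7) with h | rfl
  · rw [add_assoc, imageValue_eight_mul_add K (by omega : r + 1 < 8), imageValue_eight_mul_add K hr]
    interval_cases r <;> simp only [periodValue, le_refl] <;>
      (rw [div_le_div_iff₀ (by positivity) (by positivity)]; linarith)
  · rw [show 8 * K + 7 + 1 = 8 * (K + 1) + 0 by ring, imageValue_eight_mul_add _ (by norm_num),
      imageValue_eight_mul_add K hr]
    simp only [periodValue]
    rw [div_le_div_iff₀ (by positivity) (by positivity)]
    push_cast
    linarith

def defect (n : ℕ) : ℝ := ∑ j ∈ range n, (harmonic' j - imageValue j)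

lemma defect_eight_mul_add (K : ℕ) {r : ℕ} (hr : r ≤ 8) :
    defect (8 * K + r) =
      defect (8 * K) + ∑ s ∈ range r, (harmonic' (8 * K + s) - periodValue K s) := by
  rw [defect, sum_range_add, ← defect]
  congr 1
  refine sum_congr rfl fun s hs => ?_
  rw [imageValue_eight_mul_add K (by simp at hs; omega)]

lemma defect_eight : defect 8 = 3 / 70 := by
  norm_num [defect, sum_range_succ, imageValue, periodValue, harmonic']

lemma sum_period_ge (k : ℕ) :
    1 / 1000 / ((k : ℝ) + 2) - 1 / 1000 / ((k : ℝ) + 1) ≤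
      ∑ s ∈ range 8, (harmonic' (8 * (k + 1) + s) - periodValue (k + 1) s) := by
  simp only [sum_range_succ, sum_range_zero, periodValue, harmonic']
  push_cast
  rw [← sub_nonneg]
  field_simp
  ring_nf
  positivity

lemma defect_eight_mul_succ_ge (k : ℕ) : 3 / 70 - 1 / 1000 ≤ defect (8 * (k + 1)) := by
  have hmono : Monotone fun k : ℕ => defect (8 * (k + 1)) - 1 / 1000 / ((k : ℝ) + 1) := by
    refine monotone_nat_of_le_succ fun k => ?_
    have h := defect_eight_mul_add (k + 1) (le_refl 8)
    rw [show 8 * (k + 1) + 8 = 8 * (k + 1 + 1) by ring] at h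
    have := sum_period_ge k
    push_cast
    rw [show (k : ℝ) + 1 + 1 = k + 2 by ring]
    linarith
  have h0 := hmono (Nat.zero_le k)
  have : 0 ≤ 1 / 1000 / ((k : ℝ) + 1) := by positivity
  simp only [zero_add, mul_one, defect_eight, Nat.cast_zero] at h0
  linarith

lemma harmonic_sub_periodValue_ge (k : ℕ) {r : ℕ} (hr : r < 8) :
    -(if r = 1 ∨ r = 4 ∨ r = 6 then 1 / 140 else 0) ≤
      harmonic' (8 * (k + 1) + r) - periodValue (k + 1) r := by
  interval_cases r <;> simp only [periodValue, harmonic'] <;> norm_num <;>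
    (rw [← sub_nonneg]; field_simp; ring_nf; positivity)

lemma sum_partial_period_ge (k : ℕ) {r : ℕ} (hr : r ≤ 8) :
    -(3 / 140) ≤ ∑ s ∈ range r, (harmonic' (8 * (k + 1) + s) - periodValue (k + 1) s) := by
  set b : ℕ → ℝ := fun s => if s = 1 ∨ s = 4 ∨ s = 6 then 1 / 140 else 0
  calc -(3 / 140 : ℝ) = -∑ s ∈ range 8, b s := by norm_num [b, sum_range_succ]
    _ ≤ -∑ s ∈ range r, b s := neg_le_neg <| sum_le_sum_of_subset_of_nonneg
        (range_subset_range.2 hr) fun _ _ _ => by positivity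
    _ = ∑ s ∈ range r, -b s := by rw [sum_neg_distrib]
    _ ≤ _ := sum_le_sum fun s hs => harmonic_sub_periodValue_ge k (by simp at hs; omega)

lemma defect_ge_of_eight_le {n : ℕ} (hn : 8 ≤ n) : 1 / 100 ≤ defect n := by
  obtain ⟨k, r, hr, rfl⟩ : ∃ k r, r < 8 ∧ n = 8 * (k + 1) + r :=
    ⟨n / 8 - 1, n % 8, by omega, by omega⟩
  rw [defect_eight_mul_add (k + 1) hr.le]
  linarith [defect_eight_mul_succ_ge k, sum_partial_period_ge k hr.le]

lemma defect_nonneg (n : ℕ) : 0 ≤ defect n := by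
  rcases le_or_gt 8 n with hn | hn
  · linarith [defect_ge_of_eight_le hn]
  · interval_cases n <;> norm_num [defect, sum_range_succ, imageValue, periodValue, harmonic']

end HarmonicMixing

open HarmonicMixing

/-- There is an orthostochastic matrix `Q` such that `Qω` is nonincreasing,
`Qω ≺ ω`, but `liminf_n ∑_{j<n} (ω_j − (Qω)_j) > 0`, i.e. `Qω` is not strongly
majorized by `ω`. -/
theorem stmt_5 :
    ∃ Q : ℕ → ℕ → ℝ, Orthostochastic Q ∧
      Antitone (fun i => ∑' j, Q i j * harmonic' j) ∧
      Maj (fun i => ∑' j, Q i j * harmonic' j) harmonic' ∧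
      0 < liminf (fun n =>
        ((∑ j ∈ range n, (harmonic' j - ∑' k, Q j k * harmonic' k) : ℝ) : EReal)) atTop := by
  refine ⟨fun i j => mixingMatrix i j ^ 2, ⟨mixingMatrix, orthogonalMatrix_mixingMatrix,
    fun _ _ => rfl⟩, ?_⟩
  have hrow (i : ℕ) : ∑' j, mixingMatrix i j ^ 2 * harmonic' j = imageValue i :=
    (hasSum_mixingMatrix_sq_mul_harmonic i).tsum_eq
  simp only [hrow]
  refine ⟨antitone_imageValue, fun n => ?_, ?_⟩
  · have := defect_nonneg n
    rw [defect, sum_sub_distrib] at this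
    linarith
  · refine lt_of_lt_of_le (EReal.coe_pos.2 (by norm_num : (0 : ℝ) < 1 / 100))
      (le_liminf_of_le (by isBoundedDefault) (eventually_atTop.2 ⟨8, fun n hn => ?_⟩))
    exact_mod_cast defect_ge_of_eight_le hn
end
end

section
/- Let P be a substochastic matrix with liminf_{n→∞} (n − ∑_{i=1}^n ∑_{j=1}^n P_{ij}) = 0. Then: (i) P is doubly stochastic; and (ii) for every η ∈ c₀*, if ζ is a nonincreasing rearrangement of Pη (i.e., ζ_n = (Pη)_{σ(n)} for some bijection σ : ℕ → ℕ and ζ is nonincreasing), then ζ ≼ η. -/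
/-!
Let `d n = n - ∑_{i,j<n} P i j ≥ 0` be the deficiency of the leading `n × n` block of `P`.
For `i < n` we have `d n ≥ 1 - ∑_j P i j`, so `liminf d = 0` forces every row, and by
transposition every column, to sum to `1`.

The first `n` terms of a rearrangement of `Pη` sum to `∑_j q_j η_j` with weights
`0 ≤ q_j ≤ 1` and `∑_j q_j ≤ n`, and for antitone `η ≥ 0` such a sum is at most
`∑_{j<n} η_j`. Conversely, an antitone rearrangement `ζ` satisfies
`∑_{k<n} ζ_k ≥ ∑_{i<n} (Pη)_i ≥ ∑_{j<n} (∑_{i<n} P i j) η_j`, whence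
`∑_{j<n} (η_j - ζ_j) ≤ η_0 d n` and the liminf of the left side vanishes.
-/

noncomputable section

open Filter Finset

theorem EReal.liminf_coe_eq_zero_iff {α : Type*} {l : Filter α} {v : α → ℝ}
    (hv : ∀ a, 0 ≤ v a) :
    liminf (fun a => (v a : EReal)) l = 0 ↔ ∀ ε > 0, ∃ᶠ a in l, v a < ε := by
  constructor
  · intro h ε hε
    have hlt : liminf (fun a => (v a : EReal)) l < ε := h ▸ EReal.coe_pos.2 hε
    simpa using frequently_lt_of_liminf_lt (by isBoundedDefault) hlt
  · intro h
    refine le_antisymm (EReal.le_of_forall_lt_iff_le.1 fun ε hε => ?_)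
      (le_liminf_of_le (by isBoundedDefault) (.of_forall fun a => EReal.coe_nonneg.2 (hv a)))
    exact liminf_le_of_frequently_le'
      ((h ε (EReal.coe_pos.1 hε)).mono fun a ha => EReal.coe_le_coe_iff.2 ha.le)

theorem EReal.liminf_coe_eq_zero_of_le_mul {α : Type*} {l : Filter α} {u v : α → ℝ} {C : ℝ}
    (hu : ∀ a, 0 ≤ u a) (hv : ∀ a, 0 ≤ v a) (huv : ∀ a, u a ≤ C * v a)
    (hlim : liminf (fun a => (v a : EReal)) l = 0) :
    liminf (fun a => (u a : EReal)) l = 0 := by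
  rw [EReal.liminf_coe_eq_zero_iff hv] at hlim
  refine (EReal.liminf_coe_eq_zero_iff hu).2 fun ε hε => ?_
  have hC : 0 < |C| + 1 := by positivity
  refine (hlim (ε / (|C| + 1)) (_root_.div_pos hε hC)).mono fun a ha => ?_
  calc u a ≤ C * v a := huv a
    _ ≤ (|C| + 1) * v a := mul_le_mul_of_nonneg_right ((le_abs_self C).trans (by linarith)) (hv a)
    _ < ε := by rwa [lt_div_iff₀' hC] at ha

theorem Antitone.sum_le_sum_range_card {M : Type*} [AddCommMonoid M] [PartialOrder M]
    [IsOrderedCancelAddMonoid M] {f : ℕ → M} (hf : Antitone f) (s : Finset ℕ) :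
    ∑ k ∈ s, f k ≤ ∑ k ∈ range #s, f k := by
  rw [← sum_sdiff_le_sum_sdiff]
  calc ∑ k ∈ s \ range #s, f k ≤ #(s \ range #s) • f #s :=
        sum_le_card_nsmul _ _ _ fun k hk => hf (by simp at hk; omega)
    _ = #(range #s \ s) • f #s := by rw [card_sdiff_comm (card_range _).symm]
    _ ≤ ∑ k ∈ range #s \ s, f k :=
        card_nsmul_le_sum _ _ _ fun k hk => hf (by simp at hk; omega)

theorem Antitone.sum_range_le_of_bijective {M : Type*} [AddCommMonoid M] [PartialOrder M]
    [IsOrderedCancelAddMonoid M] {f : ℕ → M} {σ : ℕ → ℕ} (hσ : σ.Bijective)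
    (hfσ : Antitone (f ∘ σ)) (n : ℕ) :
    ∑ i ∈ range n, f i ≤ ∑ k ∈ range n, f (σ k) := by
  let e := Equiv.ofBijective σ hσ
  simpa [e, Equiv.ofBijective_apply_symm_apply] using
    hfσ.sum_le_sum_range_card ((range n).map e.symm.toEmbedding)

theorem Summable.mul_antitone {q η : ℕ → ℝ} (hq : Summable q) (hq0 : ∀ j, 0 ≤ q j)
    (hη0 : ∀ j, 0 ≤ η j) (hη : Antitone η) : Summable fun j => q j * η j :=
  (hq.mul_right (η 0)).of_nonneg_of_le (fun j => mul_nonneg (hq0 j) (hη0 j))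
    fun j => mul_le_mul_of_nonneg_left (hη j.zero_le) (hq0 j)

theorem tsum_mul_le_sum_range {q η : ℕ → ℝ} {n : ℕ} (hq : Summable q) (hq0 : ∀ j, 0 ≤ q j)
    (hq1 : ∀ j, q j ≤ 1) (hqn : ∑' j, q j ≤ n) (hη0 : ∀ j, 0 ≤ η j) (hη : Antitone η) :
    ∑' j, q j * η j ≤ ∑ j ∈ range n, η j := by
  have hqη := hq.mul_antitone hq0 hη0 hη
  have hpt : ∀ j, q j * η j - q j * η n ≤ if j < n then η j - η n else 0 := by
    intro j
    rw [← mul_sub]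
    split_ifs with hj
    · exact mul_le_of_le_one_left (sub_nonneg.2 (hη hj.le)) (hq1 j)
    · exact mul_nonpos_of_nonneg_of_nonpos (hq0 j) (sub_nonpos.2 (hη (not_lt.1 hj)))
  have hfin : ∀ j ∉ range n, (if j < n then η j - η n else 0) = 0 := fun j hj =>
    if_neg (by simpa using hj)
  have key : ∑' j, q j * η j - (∑' j, q j) * η n ≤ ∑ j ∈ range n, η j - n * η n := by
    calc ∑' j, q j * η j - (∑' j, q j) * η n = ∑' j, (q j * η j - q j * η n) := by
          rw [hqη.tsum_sub (hq.mul_right _), tsum_mul_right]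
      _ ≤ ∑' j, (if j < n then η j - η n else 0) :=
          (hqη.sub (hq.mul_right _)).tsum_le_tsum hpt (summable_of_ne_finset_zero hfin)
      _ = ∑ j ∈ range n, (η j - η n) := by
          rw [tsum_eq_sum hfin]
          exact sum_congr rfl fun j hj => if_pos (mem_range.1 hj)
      _ = ∑ j ∈ range n, η j - n * η n := by simp [sum_sub_distrib]
  nlinarith [hη0 n]

def deficiency (P : ℕ → ℕ → ℝ) (n : ℕ) : ℝ :=
  n - ∑ i ∈ range n, ∑ j ∈ range n, P i j

theorem deficiency_transpose (P : ℕ → ℕ → ℝ) (n : ℕ) :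
    deficiency (fun i j => P j i) n = deficiency P n := by
  rw [deficiency, deficiency, sum_comm]

namespace Substochastic

variable {P : ℕ → ℕ → ℝ}

theorem transpose (hP : Substochastic P) : Substochastic fun i j => P j i :=
  ⟨fun i j => hP.1 j i, hP.2.2, hP.2.1⟩

theorem summable_row (hP : Substochastic P) (i : ℕ) : Summable (P i) :=
  summable_of_sum_le (hP.1 i) (hP.2.1 i)

theorem tsum_row_le_one (hP : Substochastic P) (i : ℕ) : ∑' j, P i j ≤ 1 :=
  (hP.summable_row i).tsum_le_of_sum_le (hP.2.1 i)

theorem deficiency_nonneg (hP : Substochastic P) (n : ℕ) : 0 ≤ deficiency P n := by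
  have h : ∑ i ∈ range n, ∑ j ∈ range n, P i j ≤ ∑ _i ∈ range n, (1 : ℝ) :=
    sum_le_sum fun i _ => hP.2.1 i _
  simp only [sum_const, card_range, nsmul_eq_mul, mul_one] at h
  exact sub_nonneg.2 h

theorem one_sub_tsum_row_le_deficiency (hP : Substochastic P) {i n : ℕ} (hin : i < n) :
    1 - ∑' j, P i j ≤ deficiency P n := by
  have hi : i ∈ range n := mem_range.2 hin
  have hrow : ∑ j ∈ range n, P i j ≤ ∑' j, P i j :=
    (hP.summable_row i).sum_le_tsum _ fun j _ => hP.1 i j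
  have hrest : ∑ k ∈ (range n).erase i, ∑ j ∈ range n, P k j ≤ n - 1 := by
    calc ∑ k ∈ (range n).erase i, ∑ j ∈ range n, P k j ≤ ∑ _k ∈ (range n).erase i, (1 : ℝ) :=
          sum_le_sum fun k _ => hP.2.1 k _
      _ = n - 1 := by
          rw [sum_const, card_erase_of_mem hi, card_range, nsmul_one, Nat.cast_pred (by omega)]
  rw [deficiency, ← add_sum_erase _ _ hi]
  linarith

theorem hasSum_row_one (hP : Substochastic P)
    (h : ∀ ε > 0, ∃ᶠ n in atTop, deficiency P n < ε) (i : ℕ) : HasSum (P i) 1 := by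
  have hge : 1 - ∑' j, P i j ≤ 0 := le_of_forall_pos_lt_add fun ε hε => by
    obtain ⟨n, hn, hin⟩ := ((h ε hε).and_eventually (eventually_gt_atTop i)).exists
    linarith [hP.one_sub_tsum_row_le_deficiency hin]
  exact le_antisymm (hP.tsum_row_le_one i) (by linarith) ▸ (hP.summable_row i).hasSum

theorem summable_row_mul (hP : Substochastic P) {η : ℕ → ℝ} (hη0 : ∀ j, 0 ≤ η j)
    (hη : Antitone η) (i : ℕ) : Summable fun j => P i j * η j :=
  (hP.summable_row i).mul_antitone (hP.1 i) hη0 hη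

theorem sum_tsum_mul_le_sum_range (hP : Substochastic P) {η : ℕ → ℝ} (hη0 : ∀ j, 0 ≤ η j)
    (hη : Antitone η) (s : Finset ℕ) :
    ∑ i ∈ s, ∑' j, P i j * η j ≤ ∑ j ∈ range #s, η j := by
  rw [← Summable.tsum_finsetSum fun i _ => hP.summable_row_mul hη0 hη i]
  simp_rw [← sum_mul]
  refine tsum_mul_le_sum_range (summable_sum fun i _ => hP.summable_row i)
    (fun j => sum_nonneg fun i _ => hP.1 i j) (fun j => hP.2.2 j s) ?_ hη0 hη
  rw [Summable.tsum_finsetSum fun i _ => hP.summable_row i]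
  calc ∑ i ∈ s, ∑' j, P i j ≤ ∑ _i ∈ s, (1 : ℝ) := sum_le_sum fun i _ => hP.tsum_row_le_one i
    _ = #s := by simp

theorem sum_range_sub_sum_tsum_mul_le (hP : Substochastic P) {η : ℕ → ℝ}
    (hη0 : ∀ j, 0 ≤ η j) (hη : Antitone η) (n : ℕ) :
    ∑ j ∈ range n, η j - ∑ i ∈ range n, ∑' j, P i j * η j ≤ η 0 * deficiency P n := by
  have htrunc : ∑ j ∈ range n, (∑ i ∈ range n, P i j) * η j ≤
      ∑ i ∈ range n, ∑' j, P i j * η j := by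
    calc ∑ j ∈ range n, (∑ i ∈ range n, P i j) * η j
          = ∑ i ∈ range n, ∑ j ∈ range n, P i j * η j := by
          simp_rw [sum_mul]; exact sum_comm
      _ ≤ ∑ i ∈ range n, ∑' j, P i j * η j := sum_le_sum fun i _ =>
          (hP.summable_row_mul hη0 hη i).sum_le_tsum _ fun j _ => mul_nonneg (hP.1 i j) (hη0 j)
  have hgap : ∑ j ∈ range n, (1 - ∑ i ∈ range n, P i j) * η j ≤ η 0 * deficiency P n := by
    calc ∑ j ∈ range n, (1 - ∑ i ∈ range n, P i j) * η j
          ≤ ∑ j ∈ range n, (1 - ∑ i ∈ range n, P i j) * η 0 :=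
          sum_le_sum fun j _ => mul_le_mul_of_nonneg_left (hη j.zero_le) (sub_nonneg.2 (hP.2.2 j _))
      _ = η 0 * deficiency P n := by
          rw [deficiency, ← sum_mul, sum_sub_distrib, sum_comm]; simp [mul_comm]
  have hsplit : ∑ j ∈ range n, η j - ∑ j ∈ range n, (∑ i ∈ range n, P i j) * η j =
      ∑ j ∈ range n, (1 - ∑ i ∈ range n, P i j) * η j := by
    rw [← sum_sub_distrib]; exact sum_congr rfl fun j _ => by ring
  linarith

end Substochastic

/-- If `P` is substochastic and `liminf_n (n − ∑_{i<n}∑_{j<n} P_{ij}) = 0`,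
then (i) `P` is doubly stochastic, and (ii) every nonincreasing rearrangement of `Pη`
is strongly majorized by `η`, for every `η ∈ c₀*`. -/
theorem stmt_6 (P : ℕ → ℕ → ℝ) (hP : Substochastic P)
    (h : liminf (fun n : ℕ =>
        (((n : ℝ) - ∑ i ∈ range n, ∑ j ∈ range n, P i j : ℝ) : EReal)) atTop = 0) :
    ((∀ i, HasSum (fun j => P i j) (1 : ℝ)) ∧ (∀ j, HasSum (fun i => P i j) (1 : ℝ))) ∧
    (∀ η : ℕ → ℝ, IsCoStar η → ∀ σ : ℕ → ℕ, Function.Bijective σ →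
      ∀ ζ : ℕ → ℝ, (∀ n, ζ n = ∑' j, P (σ n) j * η j) → Antitone ζ →
        SMaj ζ η) := by
  have hdef : ∀ ε > 0, ∃ᶠ n in atTop, deficiency P n < ε :=
    (EReal.liminf_coe_eq_zero_iff hP.deficiency_nonneg).1 h
  have hcols : ∀ j, HasSum (fun i => P i j) 1 :=
    hP.transpose.hasSum_row_one (by simpa only [deficiency_transpose] using hdef)
  refine ⟨⟨hP.hasSum_row_one hdef, hcols⟩, ?_⟩
  rintro η ⟨hη0, hη, -⟩ σ hσ ζ hζ hζanti
  obtain rfl : ζ = (fun i => ∑' j, P i j * η j) ∘ σ := funext hζ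
  have hmaj : Maj _ η := fun n => by
    simpa using hP.sum_tsum_mul_le_sum_range hη0 hη ((range n).map ⟨σ, hσ.1⟩)
  have hgap_nonneg : ∀ n, 0 ≤ ∑ j ∈ range n, (η j - ∑' k, P (σ j) k * η k) := fun n => by
    rw [sum_sub_distrib]; linarith [hmaj n]
  refine ⟨hmaj, EReal.liminf_coe_eq_zero_of_le_mul (C := η 0) hgap_nonneg
    hP.deficiency_nonneg (fun n => ?_) h⟩
  simp only [Function.comp_apply, sum_sub_distrib]
  linarith [hP.sum_range_sub_sum_tsum_mul_le hη0 hη n,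
    hζanti.sum_range_le_of_bijective hσ n]

end
end

section
/- Let ξ, η ∈ c₀* both be nonsummable, with ξ ≺ η and liminf_{n→∞} ∑_{j=1}^n (η_j − ξ_j) > 0 (i.e., ξ is not strongly majorized by η). Then there exist integers p and n with 0 ≤ p < n such that: (a) ∑_{j=1}^k ξ_j ≤ ∑_{j=1}^{min(k, n−p)} η_j for every 1 ≤ k ≤ n; and (b) ∑_{j=n+1}^{n+m} ξ_j ≤ ∑_{j=n−p+1}^{n−p+m} η_j for every m ≥ 1. -/
noncomputable section

open Filter Finset

/-!
Fix `p` and compare `ξ` with `η` shifted by `p`: `f k = ∑_{j < k - p} η j - ∑_{j < k} ξ j`.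
Given `ξ ≺ η`, condition (a) follows from `f n ≥ 0`, and condition (b) says that `f` attains
its minimum over `[n, ∞)` at `n`. Since a window of `p` consecutive terms of `η` tends to `0`,
`f` inherits the positive liminf of `∑ (η - ξ)`, so it is eventually above some `c > 0`. Because
`∑ ξ` diverges, `p` can be taken so large that `f` is still negative when `η` has already dropped
below `c`. From then on `f` rises by less than `c` per step, so at the point `n` where `f` becomes
nonnegative for good it is below `c`, hence below its eventual values, and a minimum of `f` over
`[n, ∞)` exists.
-/

open Topology

lemma exists_real_eventually_lt_of_lt_liminf {ι : Type*} {l : Filter ι} {u : ι → ℝ} {a : ℝ}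
    (h : (a : EReal) < liminf (fun i => (u i : EReal)) l) :
    ∃ c : ℝ, a < c ∧ ∀ᶠ i in l, c < u i := by
  obtain ⟨c, hac, hc⟩ := EReal.lt_iff_exists_real_btwn.1 h
  exact ⟨c, EReal.coe_lt_coe_iff.1 hac,
    (eventually_lt_of_lt_liminf hc).mono fun _ hi => EReal.coe_lt_coe_iff.1 hi⟩

lemma tendsto_sum_Ico_tsub_self {M : Type*} [AddCommMonoid M] [TopologicalSpace M]
    [ContinuousAdd M] {f : ℕ → M} (hf : Tendsto f atTop (𝓝 0)) (p : ℕ) :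
    Tendsto (fun k => ∑ j ∈ Ico (k - p) k, f j) atTop (𝓝 0) := by
  have hwindow : ∀ᶠ k in atTop, ∑ i ∈ range p, f (k - p + i) = ∑ j ∈ Ico (k - p) k, f j := by
    filter_upwards [eventually_ge_atTop p] with k hk
    rw [sum_Ico_eq_sum_range, Nat.sub_sub_self hk]
  refine Tendsto.congr' hwindow ?_
  simpa using tendsto_finsetSum (range p) fun i _ =>
    hf.comp <| tendsto_atTop_mono (fun k => Nat.le_add_right _ i) (tendsto_sub_atTop_nat p)

lemma exists_ge_isMinOn_Ici {β : Type*} [LinearOrder β] {f : ℕ → β} {n₀ : ℕ}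
    (h : ∀ᶠ k in atTop, f n₀ < f k) : ∃ n ≥ n₀, IsMinOn f (Set.Ici n) n := by
  obtain ⟨N, hN⟩ := eventually_atTop.1 h
  obtain ⟨n, hn, hmin⟩ :=
    (Icc n₀ (max n₀ N)).exists_min_image f ⟨n₀, left_mem_Icc.2 (le_max_left _ _)⟩
  refine ⟨n, (mem_Icc.1 hn).1, isMinOn_iff.2 fun k hk => ?_⟩
  by_cases hkN : k ≤ max n₀ N
  · exact hmin k (mem_Icc.2 ⟨(mem_Icc.1 hn).1.trans hk, hkN⟩)
  · exact (hmin n₀ (left_mem_Icc.2 (le_max_left _ _))).trans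
      (hN k (by omega)).le

lemma exists_nonneg_isMinOn_Ici {f : ℕ → ℝ} {c : ℝ} {m : ℕ} (hc : 0 ≤ c)
    (hev : ∀ᶠ k in atTop, c < f k) (hm : f m < 0) (hstep : ∀ k ≥ m, f (k + 1) < f k + c) :
    ∃ n > m, 0 ≤ f n ∧ IsMinOn f (Set.Ici n) n := by
  classical
  have hex : ∃ n, ∀ k ≥ n, 0 ≤ f k := eventually_atTop.1 (hev.mono fun _ hk => hc.trans hk.le)
  set n₁ := Nat.find hex
  have hmn₁ : m < n₁ := by
    by_contra! hle
    exact (Nat.find_spec hex m hle).not_gt hm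
  have hprev : f (n₁ - 1) < 0 := by
    obtain ⟨k, hk, hfk⟩ : ∃ k ≥ n₁ - 1, f k < 0 := by
      simpa using Nat.find_min hex (show n₁ - 1 < n₁ by omega)
    obtain rfl : k = n₁ - 1 := by
      by_contra hne
      exact (Nat.find_spec hex k (by omega)).not_gt hfk
    exact hfk
  have hsmall : f n₁ < c := by
    have := hstep (n₁ - 1) (by omega)
    rw [Nat.sub_add_cancel (by omega)] at this
    linarith
  obtain ⟨n, hn, hmin⟩ := exists_ge_isMinOn_Ici (hev.mono fun _ hk => hsmall.trans hk)
  exact ⟨n, by omega, Nat.find_spec hex n hn, hmin⟩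

lemma sum_range_le_sum_range_min {ξ η : ℕ → ℝ} (hξ : ∀ j, 0 ≤ ξ j) (hmaj : Maj ξ η) {n q k : ℕ}
    (hn : ∑ j ∈ range n, ξ j ≤ ∑ j ∈ range q, η j) (hk : k ≤ n) :
    ∑ j ∈ range k, ξ j ≤ ∑ j ∈ range (min k q), η j := by
  rcases le_total k q with hkq | hqk
  · rw [min_eq_left hkq]
    exact hmaj k
  · rw [min_eq_right hqk]
    exact (sum_le_sum_of_subset_of_nonneg (range_subset_range.2 hk) fun j _ _ => hξ j).trans hn

lemma sum_Ico_le_sum_Ico_of_isMinOn {ξ η : ℕ → ℝ} {p n : ℕ} (hpn : p ≤ n)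
    (hmin : IsMinOn (fun k => ∑ j ∈ range (k - p), η j - ∑ j ∈ range k, ξ j) (Set.Ici n) n)
    (m : ℕ) : ∑ j ∈ Ico n (n + m), ξ j ≤ ∑ j ∈ Ico (n - p) (n - p + m), η j := by
  have h := isMinOn_iff.1 hmin (n + m) (Nat.le_add_right n m)
  rw [show n + m - p = n - p + m by omega] at h
  rw [sum_Ico_eq_sub _ (Nat.le_add_right _ _), sum_Ico_eq_sub _ (Nat.le_add_right _ _)]
  linarith

theorem stmt_11_general (ξ η : ℕ → ℝ) (hξ : IsCoStar ξ) (hη : IsCoStar η)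
    (hξs : ¬ Summable ξ) (hmaj : Maj ξ η)
    (h : 0 < liminf (fun n => ((∑ j ∈ range n, (η j - ξ j) : ℝ) : EReal)) atTop) :
    ∃ p n : ℕ, p < n ∧
      (∀ k, k ≤ n → ∑ j ∈ range k, ξ j ≤ ∑ j ∈ range (min k (n - p)), η j) ∧
      (∀ m : ℕ, ∑ j ∈ Finset.Ico n (n + m), ξ j ≤
          ∑ j ∈ Finset.Ico (n - p) (n - p + m), η j) := by
  obtain ⟨c, hc, hgap⟩ := exists_real_eventually_lt_of_lt_liminf
    (u := fun k => ∑ j ∈ range k, (η j - ξ j)) (a := 0) (by rwa [EReal.coe_zero])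
  obtain ⟨J, hJ⟩ := eventually_atTop.1 (hη.2.2.eventually_lt_const (half_pos hc))
  obtain ⟨p, hp⟩ := (((not_summable_iff_tendsto_nat_atTop_of_nonneg hξ.1).1 hξs).eventually_gt_atTop
    (∑ j ∈ range J, η j)).exists
  set f : ℕ → ℝ := fun k => ∑ j ∈ range (k - p), η j - ∑ j ∈ range k, ξ j with hf
  have hev : ∀ᶠ k in atTop, c / 2 < f k := by
    filter_upwards [hgap, (tendsto_sum_Ico_tsub_self hη.2.2 p).eventually_lt_const (half_pos hc)]
      with k hk hwindow
    rw [sum_sub_distrib] at hk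
    linarith [sum_Ico_eq_sub η (Nat.sub_le k p)]
  have hneg : f (p + J) < 0 := by
    have := sum_le_sum_of_subset_of_nonneg (range_subset_range.2 (Nat.le_add_right p J))
      fun j _ _ => hξ.1 j
    simp only [hf, Nat.add_sub_cancel_left]
    linarith
  have hstep : ∀ k ≥ p + J, f (k + 1) < f k + c / 2 := by
    intro k hk
    simp only [hf, show k + 1 - p = k - p + 1 by omega, sum_range_succ]
    linarith [hJ (k - p) (by omega), hξ.1 k]
  obtain ⟨n, hn, hfn, hmin⟩ := exists_nonneg_isMinOn_Ici (half_pos hc).le hev hneg hstep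
  exact ⟨p, n, by omega, fun k hk => sum_range_le_sum_range_min hξ.1 hmaj (sub_nonneg.1 hfn) hk,
    sum_Ico_le_sum_Ico_of_isMinOn (by omega) hmin⟩

/-- If `ξ, η ∈ c₀*` are nonsummable, `ξ ≺ η`, and
`liminf_n ∑_{j<n} (η_j − ξ_j) > 0`, then there are integers `0 ≤ p < n` with:
(a) `∑_{j<k} ξ_j ≤ ∑_{j<min(k, n−p)} η_j` for every `k ≤ n`
    (i.e. `ξχ[1,n] ≺ ηχ[1,n−p]` in the paper's 1-indexed notation); and
(b) `∑_{j=n}^{n+m-1} ξ_j ≤ ∑_{j=n−p}^{n−p+m-1} η_j` for every `m`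
    (i.e. `ξ^{(n)} ≺ η^{(n−p)}`). -/
theorem stmt_11 (ξ η : ℕ → ℝ) (hξ : IsCoStar ξ) (hη : IsCoStar η)
    (hξs : ¬ Summable ξ) (hηs : ¬ Summable η) (hmaj : Maj ξ η)
    (h : 0 < liminf (fun n => ((∑ j ∈ range n, (η j - ξ j) : ℝ) : EReal)) atTop) :
    ∃ p n : ℕ, p < n ∧
      (∀ k, k ≤ n → ∑ j ∈ range k, ξ j ≤ ∑ j ∈ range (min k (n - p)), η j) ∧
      (∀ m : ℕ, ∑ j ∈ Finset.Ico n (n + m), ξ j ≤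
          ∑ j ∈ Finset.Ico (n - p) (n - p + m), η j) :=
  stmt_11_general ξ η hξ hη hξs hmaj h

end
end
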